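/- arXiv:1808.06747 — 3 statements merged into one kernel-verified Lean document; each statement's English description precedes it below -/
import Mathlib

section
/- Let X be a Banach lattice and let (f_n) be a norm bounded disjoint sequence in the positive cone X₊. Then (f_n) converges weakly to 0 if and only if no subsequence of (f_n) is equivalent to the unit vector basis of ℓ¹ (i.e., no subsequence (f_{n_k}) satisfies a lower ℓ¹-estimate: there exists M > 0 with (1/M)·∑_{k=1}^m |a_k| ≤ ‖∑_{k=1}^m a_k f_{n_k}‖ for all m and scalars a_k). -/
open Filter Topology Pointwise

noncomputable section

/-- A directed index type for nets. -/
structure DirectedType : Type 1 where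
  ι : Type
  r : ι → ι → Prop
  nonempty : Nonempty ι
  refl : ∀ a, r a a
  trans : ∀ a b c, r a b → r b c → r a c
  directed : ∀ a b, ∃ c, r a c ∧ r b c

/-- The natural numbers as a directed type (for sequences). -/
def natDir : DirectedType where
  ι := ℕ
  r := (· ≤ ·)
  nonempty := ⟨0⟩
  refl := fun _ => le_refl _
  trans := fun _ _ _ => le_trans
  directed := fun a b => ⟨max a b, le_max_left _ _, le_max_right _ _⟩

/-- A real valued net tends to zero. -/
def NetTendstoZero (D : DirectedType) (u : D.ι → ℝ) : Prop :=
  ∀ ε : ℝ, 0 < ε → ∃ i₀, ∀ i, D.r i₀ i → |u i| < ε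

variable {X : Type*} [NormedAddCommGroup X] [Lattice X] [HasSolidNorm X] [IsOrderedAddMonoid X] [NormedSpace ℝ X]

/-- Order convergence of a net: there is a decreasing net `h` with infimum `0`
dominating `|f i - x|` eventually. -/
def OrderConvNet (D : DirectedType) (f : D.ι → X) (x : X) : Prop :=
  ∃ (E : DirectedType) (h : E.ι → X),
    (∀ γ₁ γ₂, E.r γ₁ γ₂ → h γ₂ ≤ h γ₁) ∧ IsGLB (Set.range h) 0 ∧
      ∀ γ, ∃ i₀, ∀ i, D.r i₀ i → |f i - x| ≤ h γ

/-- The order closure of a set: all limits of order convergent nets from the set. -/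
def OrderClosure (C : Set X) : Set X :=
  {x | ∃ (D : DirectedType) (f : D.ι → X), (∀ i, f i ∈ C) ∧ OrderConvNet D f x}

/-- A set is order closed if it contains all order limits of nets from it. -/
def IsOrderClosed (C : Set X) : Prop := OrderClosure C ⊆ C

/-- Unbounded order convergence of a net. -/
def UOConvNet (D : DirectedType) (f : D.ι → X) (x : X) : Prop :=
  ∀ h : X, 0 ≤ h → OrderConvNet D (fun i => |f i - x| ⊓ h) 0

/-- Membership in the order continuous dual `X_n^~`. -/
def InOCDual (g : X →L[ℝ] ℝ) : Prop :=
  ∀ (D : DirectedType) (f : D.ι → X), OrderConvNet D f 0 →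
    NetTendstoZero D fun i => g (f i)

/-- Membership in the unbounded order continuous dual `X_uo^~`. -/
def InUODual (g : X →L[ℝ] ℝ) : Prop :=
  ∀ (D : DirectedType) (f : D.ι → X), (∃ M, ∀ i, ‖f i‖ ≤ M) → UOConvNet D f 0 →
    NetTendstoZero D fun i => g (f i)

/-- Convergence of a net in the topology `σ(X, X_n^~)`. -/
def SigmaNConvNet (D : DirectedType) (f : D.ι → X) (x : X) : Prop :=
  ∀ g : X →L[ℝ] ℝ, InOCDual g → NetTendstoZero D fun i => g (f i) - g x

/-- Convergence of a net in the topology `σ(X, X_uo^~)`. -/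
def SigmaUOConvNet (D : DirectedType) (f : D.ι → X) (x : X) : Prop :=
  ∀ g : X →L[ℝ] ℝ, InUODual g → NetTendstoZero D fun i => g (f i) - g x

/-- A set is `σ(X, X_n^~)`-closed. -/
def IsSigmaNClosed (C : Set X) : Prop :=
  ∀ (D : DirectedType) (f : D.ι → X), (∀ i, f i ∈ C) →
    ∀ x, SigmaNConvNet D f x → x ∈ C

/-- A set is `σ(X, X_uo^~)`-closed. -/
def IsSigmaUOClosed (C : Set X) : Prop :=
  ∀ (D : DirectedType) (f : D.ι → X), (∀ i, f i ∈ C) →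
    ∀ x, SigmaUOConvNet D f x → x ∈ C

/-- The `σ(X, X_n^~)`-closure of a set. -/
def SigmaNClosure (C : Set X) : Set X :=
  {x | ∃ (D : DirectedType) (f : D.ι → X), (∀ i, f i ∈ C) ∧ SigmaNConvNet D f x}

/-- The `|σ|(X, X_n^~)`-sequential closure of a set. -/
def AbsSigmaSeqClosure (C : Set X) : Set X :=
  {x | ∃ s : ℕ → X, (∀ n, s n ∈ C) ∧
    ∀ g : X →L[ℝ] ℝ, InOCDual g → Tendsto (fun n => g (|s n - x|)) atTop (𝓝 0)}

/-- A set is `|σ|(X, X_n^~)`-sequentially closed. -/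
def IsAbsSigmaSeqClosed (C : Set X) : Prop := AbsSigmaSeqClosure C ⊆ C

/-- The order on the dual: `g ≤ h` iff `g x ≤ h x` on the positive cone. -/
def dualLE (g h : X →L[ℝ] ℝ) : Prop := ∀ x : X, 0 ≤ x → g x ≤ h x

/-- Order continuity of the norm on a subset `S` of the dual: every net in `S`
decreasing to `0` (infimum `0` among lower bounds from `S`) converges to `0` in
the operator norm. -/
def DualOCOn (S : Set (X →L[ℝ] ℝ)) : Prop :=
  ∀ (D : DirectedType) (f : D.ι → (X →L[ℝ] ℝ)), (∀ i, f i ∈ S) →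
    (∀ i j, D.r i j → dualLE (f j) (f i)) → (∀ i, dualLE 0 (f i)) →
    (∀ h ∈ S, (∀ i, dualLE h (f i)) → dualLE h 0) →
    NetTendstoZero D fun i => ‖f i‖

/-- A sequence is weakly null. -/
def WeaklyNull (f : ℕ → X) : Prop :=
  ∀ g : X →L[ℝ] ℝ, Tendsto (fun n => g (f n)) atTop (𝓝 0)

/-- The sequence satisfies a lower `ℓ¹`-estimate, i.e. it is equivalent to the
unit vector basis of `ℓ¹`. -/
def IsL1Basic (f : ℕ → X) : Prop :=
  ∃ M : ℝ, 0 < M ∧ ∀ (m : ℕ) (a : ℕ → ℝ),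
    (1 / M) * ∑ k ∈ Finset.range m, |a k| ≤ ‖∑ k ∈ Finset.range m, a k • f k‖

variable (X)

/-- Order continuity of the norm of `X`. -/
def OCNorm : Prop :=
  ∀ (D : DirectedType) (f : D.ι → X), (∀ i j, D.r i j → f j ≤ f i) →
    IsGLB (Set.range f) 0 → NetTendstoZero D fun i => ‖f i‖

/-- The order continuous dual as a set of continuous linear functionals. -/
def OCDual : Set (X →L[ℝ] ℝ) := {g | InOCDual g}

/-- The norm dual `X*` is order continuous. -/
def DualOrderContinuous : Prop := DualOCOn (Set.univ : Set (X →L[ℝ] ℝ))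

/-- The order continuous dual `X_n^~` is order continuous. -/
def OCDualOrderContinuous : Prop := DualOCOn (OCDual X)

/-- `X` is monotonically complete. -/
def MonotonicallyComplete : Prop :=
  ∀ (D : DirectedType) (f : D.ι → X), (∀ i j, D.r i j → f i ≤ f j) →
    (∃ M, ∀ i, ‖f i‖ ≤ M) → ∃ s, IsLUB (Set.range f) s

/-- `X` is Dedekind complete. -/
def DedekindComplete : Prop :=
  ∀ S : Set X, S.Nonempty → BddAbove S → ∃ s, IsLUB S s

/-- `X` is σ-Dedekind complete. -/
def SigmaDedekindComplete : Prop :=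
  ∀ f : ℕ → X, BddAbove (Set.range f) → ∃ s, IsLUB (Set.range f) s

/-- `X` has the weak Fatou property. -/
def WeakFatou : Prop :=
  ∃ r : ℝ, 0 < r ∧ ∀ (D : DirectedType) (f : D.ι → X),
    (∀ i j, D.r i j → f i ≤ f j) → ∀ s, IsLUB (Set.range f) s →
    ∀ M : ℝ, (∀ i, ‖f i‖ ≤ M) → ‖s‖ ≤ r * M

/-- `X_n^~` separates the points of `X`. -/
def OCDualSeparatesPoints : Prop :=
  ∀ x : X, x ≠ 0 → ∃ g : X →L[ℝ] ℝ, InOCDual g ∧ g x ≠ 0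

/-- `X_n^~` contains a strictly positive element. -/
def HasStrictlyPositiveOCFunctional : Prop :=
  ∃ g : X →L[ℝ] ℝ, InOCDual g ∧ ∀ x : X, x ≠ 0 → 0 < g (|x|)

/-- The unit ball `B` determined by `X_n^~`. -/
def KSBall : Set X :=
  {x | ∀ g : X →L[ℝ] ℝ, InOCDual g → dualLE 0 g → ‖g‖ ≤ 1 → g (|x|) ≤ 1}

/-- `σ(X, X_n^~)` has the Krein–Smulian property. -/
def KreinSmulianProperty : Prop :=
  ∀ C : Set X, Convex ℝ C →
    (∀ k : ℕ, IsSigmaNClosed (C ∩ (k : ℝ) • KSBall X)) → IsSigmaNClosed C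

/-- Property `P1`: every order closed convex set is `σ(X, X_n^~)`-closed. -/
def PropP1 : Prop := ∀ C : Set X, Convex ℝ C → IsOrderClosed C → IsSigmaNClosed C

/-- Property `P4`: every norm bounded order closed convex set is
`|σ|(X, X_n^~)`-sequentially closed. -/
def PropP4 : Prop :=
  ∀ C : Set X, Convex ℝ C → (∃ M, ∀ x ∈ C, ‖x‖ ≤ M) → IsOrderClosed C →
    IsAbsSigmaSeqClosed C

/-- The disjoint order continuity property. -/
def DOCP : Prop :=
  ∀ f : ℕ → X, (∀ n, 0 ≤ f n) → (∃ M, ∀ n, ‖f n‖ ≤ M) →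
    (∀ n m, n ≠ m → f n ⊓ f m = 0) →
    (∀ g : X →L[ℝ] ℝ, InOCDual g → Tendsto (fun n => g (f n)) atTop (𝓝 0)) →
    WeaklyNull f

/-- The order continuous part `X_a` of `X`. -/
def OrderContPart : Set X :=
  {f | ∀ (D : DirectedType) (g : D.ι → X), (∀ i, |g i| ≤ |f|) →
    OrderConvNet D g 0 → NetTendstoZero D fun i => ‖g i‖}

/-- The order subsequence splitting property. -/
def OSSP : Prop :=
  ∀ f : ℕ → X, (∀ n, 0 ≤ f n) → (∃ M, ∀ n, ‖f n‖ ≤ M) → UOConvNet natDir f 0 →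
    ∃ φ : ℕ → ℕ, StrictMono φ ∧ ∃ x y z : ℕ → X,
      (∀ k, f (φ k) = x k + y k + z k) ∧
      (∀ k, 0 ≤ x k) ∧ (∀ k, 0 ≤ y k) ∧ (∀ k, 0 ≤ z k) ∧
      (∀ k, x k ∈ OrderContPart X) ∧
      (∀ k l, k ≠ l → y k ⊓ y l = 0) ∧
      (∃ b, ∀ k, z k ≤ b)

variable {X}

/-!
If `f` is weakly null, so is each subsequence, and by Hahn–Banach `0` then lies in the norm closure
of the convex hull of that subsequence; a lower `ℓ¹`-estimate with constant `M` keeps this convex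
hull at norm at least `1 / M`. Conversely, if `g (f n) ↛ 0`, a subsequence satisfies
`ε ≤ ± g (f (φ k))`. Disjointness gives `|∑ a_k f_{φ k}| = ∑ |a_k| f_{φ k}`, hence
`‖g‖ ‖∑ a_k f_{φ k}‖ ≥ g (∑ |a_k| f_{φ k}) ≥ ε ∑ |a_k|`.
-/

section LatticeOrderedGroup

variable {α : Type*} [Lattice α] [AddCommGroup α] [IsOrderedAddMonoid α]

lemma inf_add_le_inf_add_inf {a b c : α} (ha : 0 ≤ a) (hb : 0 ≤ b) (hc : 0 ≤ c) :
    a ⊓ (b + c) ≤ a ⊓ b + a ⊓ c := by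
  have h₁ : a ⊓ (b + c) ≤ a ⊓ b + c := by
    rw [inf_add]
    exact inf_le_inf_right _ (le_add_of_nonneg_right hc)
  have h₂ : a ⊓ (b + c) ≤ a ⊓ b + a := inf_le_left.trans (le_add_of_nonneg_left (le_inf ha hb))
  calc a ⊓ (b + c) ≤ (a ⊓ b + c) ⊓ (a ⊓ b + a) := le_inf h₁ h₂
    _ = a ⊓ b + a ⊓ c := by rw [← add_inf, inf_comm c]

lemma add_inf_eq_zero {x y z : α} (hx : 0 ≤ x) (hy : 0 ≤ y) (hz : 0 ≤ z)
    (hxz : x ⊓ z = 0) (hyz : y ⊓ z = 0) : (x + y) ⊓ z = 0 := by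
  refine le_antisymm ?_ (le_inf (add_nonneg hx hy) hz)
  calc (x + y) ⊓ z = z ⊓ (x + y) := inf_comm _ _
    _ ≤ z ⊓ x + z ⊓ y := inf_add_le_inf_add_inf hz hx hy
    _ = 0 := by rw [inf_comm z x, inf_comm z y, hxz, hyz, add_zero]

lemma Finset.sum_inf_eq_zero {ι : Type*} {s : Finset ι} {u : ι → α} {z : α}
    (hu : ∀ i ∈ s, 0 ≤ u i) (hz : 0 ≤ z) (h : ∀ i ∈ s, u i ⊓ z = 0) :
    (∑ i ∈ s, u i) ⊓ z = 0 :=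
  (Finset.sum_induction u (fun x => 0 ≤ x ∧ x ⊓ z = 0)
    (fun _ _ hx hy => ⟨add_nonneg hx.1 hy.1, add_inf_eq_zero hx.1 hy.1 hz hx.2 hy.2⟩)
    ⟨le_rfl, inf_eq_left.2 hz⟩ fun i hi => ⟨hu i hi, h i hi⟩).2

lemma abs_add_eq_add_abs_of_inf_eq_zero {x y : α} (h : |x| ⊓ |y| = 0) :
    |x + y| = |x| + |y| := by
  have key : ∀ u w : α, |u| ⊓ |w| = 0 → |u| ≤ |u + w| := fun u w huw =>
    calc |u| = |u| ⊓ (|u + w| + |w|) :=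
          (inf_eq_left.2 (by simpa using abs_add_le (u + w) (-w))).symm
      _ ≤ |u| ⊓ |u + w| + |u| ⊓ |w| :=
          inf_add_le_inf_add_inf (abs_nonneg _) (abs_nonneg _) (abs_nonneg _)
      _ ≤ |u + w| := by rw [huw, add_zero]; exact inf_le_right
  refine le_antisymm (abs_add_le x y) ?_
  calc |x| + |y| = |x| ⊔ |y| := by rw [← inf_add_sup, h, zero_add]
    _ ≤ |x + y| := sup_le (key x y h) (add_comm y x ▸ key y x (inf_comm |x| |y| ▸ h))

end LatticeOrderedGroup

section OrderedModule

variable {E : Type*} [Lattice E] [AddCommGroup E] [IsOrderedAddMonoid E] [Module ℝ E]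

instance OrderClosedTopology.toPosSMulMono [TopologicalSpace E] [ContinuousSMul ℝ E]
    [OrderClosedTopology E] : PosSMulMono ℝ E := by
  refine PosSMulMono.of_smul_nonneg fun a ha v hv => ?_
  -- `0 ≤ 2 • x → 0 ≤ x` makes the dyadic multiples of `v` nonnegative; the cone is closed.
  have dyadic : ∀ k : ℕ, 0 ≤ ((2 : ℝ) ^ k)⁻¹ • v := by
    intro k
    induction k with
    | zero => simpa using hv
    | succ k ih =>
      refine nsmul_two_semiclosed ?_
      rwa [← Nat.cast_smul_eq_nsmul ℝ, smul_smul, Nat.cast_two, pow_succ', mul_inv,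
        mul_inv_cancel_left₀ (two_ne_zero' ℝ)]
  have approx : ∀ k : ℕ, 0 ≤ ((⌊a * 2 ^ k⌋₊ : ℝ) / 2 ^ k) • v := fun k => by
    rw [div_eq_mul_inv, mul_smul, Nat.cast_smul_eq_nsmul]
    exact nsmul_nonneg (dyadic k) _
  have lim : Tendsto (fun k : ℕ => (⌊a * 2 ^ k⌋₊ : ℝ) / 2 ^ k) atTop (𝓝 a) :=
    (tendsto_nat_floor_mul_div_atTop ha).comp (tendsto_pow_atTop_atTop_of_one_lt one_lt_two)
  exact ge_of_tendsto' (lim.smul_const v) approx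

variable [PosSMulMono ℝ E]

lemma abs_smul_of_nonneg_right {v : E} (hv : 0 ≤ v) (a : ℝ) : |a • v| = |a| • v := by
  rcases le_total 0 a with ha | ha
  · rw [abs_of_nonneg (smul_nonneg ha hv), abs_of_nonneg ha]
  · rw [abs_of_nonpos ha, ← abs_neg, ← neg_smul, abs_of_nonneg (smul_nonneg (neg_nonneg.2 ha) hv)]

lemma smul_inf_smul_eq_zero {v w : E} (hv : 0 ≤ v) (hw : 0 ≤ w) (h : v ⊓ w = 0)
    {a b : ℝ} (ha : 0 ≤ a) (hb : 0 ≤ b) : (a • v) ⊓ (b • w) = 0 := by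
  obtain ⟨c, hc, hac, hbc⟩ : ∃ c : ℝ, 0 < c ∧ a ≤ c ∧ b ≤ c :=
    ⟨a + b + 1, by linarith, by linarith, by linarith⟩
  refine le_antisymm ?_ (le_inf (smul_nonneg ha hv) (smul_nonneg hb hw))
  rw [← smul_zero c, ← h, ← inv_smul_le_iff_of_pos hc]
  refine le_inf ?_ ?_ <;> rw [inv_smul_le_iff_of_pos hc]
  · exact inf_le_left.trans (smul_le_smul_of_nonneg_right hac hv)
  · exact inf_le_right.trans (smul_le_smul_of_nonneg_right hbc hw)

lemma abs_sum_smul_of_pairwise_inf_eq_zero {ι : Type*} {v : ι → E} (hv : ∀ i, 0 ≤ v i)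
    (hd : Pairwise fun i j => v i ⊓ v j = 0) (a : ι → ℝ) (s : Finset ι) :
    |∑ i ∈ s, a i • v i| = ∑ i ∈ s, |a i| • v i := by
  classical
  induction s using Finset.induction_on with
  | empty => simp
  | insert j s hj ih =>
    rw [Finset.sum_insert hj, Finset.sum_insert hj, add_comm, add_comm (|a j| • v j), ← ih,
      ← abs_smul_of_nonneg_right (hv j)]
    refine abs_add_eq_add_abs_of_inf_eq_zero ?_
    rw [ih, abs_smul_of_nonneg_right (hv j)]
    refine Finset.sum_inf_eq_zero (fun i _ => smul_nonneg (abs_nonneg _) (hv i))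
      (smul_nonneg (abs_nonneg _) (hv j)) fun i hi => ?_
    exact smul_inf_smul_eq_zero (hv i) (hv j) (hd (ne_of_mem_of_not_mem hi hj))
      (abs_nonneg _) (abs_nonneg _)

end OrderedModule

section NormedSpace

variable {E : Type*} [NormedAddCommGroup E] [NormedSpace ℝ E]

lemma IsL1Basic.exists_pos_le_norm_finset_sum {f : ℕ → E} (hf : IsL1Basic f) :
    ∃ c > 0, ∀ (s : Finset ℕ) (a : ℕ → ℝ), c * ∑ k ∈ s, |a k| ≤ ‖∑ k ∈ s, a k • f k‖ := by
  classical
  obtain ⟨M, hM, hest⟩ := hf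
  refine ⟨1 / M, by positivity, fun s a => ?_⟩
  obtain ⟨m, hsm⟩ := s.exists_nat_subset_range
  simpa [apply_ite, ite_smul, Finset.sum_ite_mem, Finset.inter_eq_right.2 hsm] using
    hest m fun k => if k ∈ s then a k else 0

lemma IsL1Basic.exists_pos_le_norm_of_mem_convexHull {f : ℕ → E} (hf : IsL1Basic f) :
    ∃ c > 0, ∀ x ∈ convexHull ℝ (Set.range f), c ≤ ‖x‖ := by
  obtain ⟨c, hc, hest⟩ := hf.exists_pos_le_norm_finset_sum
  refine ⟨c, hc, fun x hx => ?_⟩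
  rw [convexHull_range_eq_exists_affineCombination] at hx
  obtain ⟨s, w, hw₀, hw₁, rfl⟩ := hx
  rw [s.affineCombination_eq_linear_combination f w hw₁]
  calc c = c * ∑ k ∈ s, |w k| := by
        rw [Finset.sum_congr rfl fun k hk => abs_of_nonneg (hw₀ k hk), hw₁, mul_one]
    _ ≤ _ := hest s w

lemma WeaklyNull.comp_strictMono {f : ℕ → E} (hf : WeaklyNull f) {φ : ℕ → ℕ}
    (hφ : StrictMono φ) : WeaklyNull (f ∘ φ) :=
  fun g => (hf g).comp hφ.tendsto_atTop

lemma WeaklyNull.zero_mem_closure_convexHull {f : ℕ → E} (hf : WeaklyNull f) :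
    (0 : E) ∈ closure (convexHull ℝ (Set.range f)) := by
  by_contra h
  obtain ⟨g, u, hg0, hgu⟩ :=
    geometric_hahn_banach_point_closed (convex_convexHull ℝ _).closure isClosed_closure h
  rw [map_zero] at hg0
  obtain ⟨n, hn⟩ := ((hf g).eventually (gt_mem_nhds hg0)).exists
  exact lt_asymm hn (hgu _ (subset_closure (subset_convexHull ℝ _ ⟨n, rfl⟩)))

lemma WeaklyNull.not_isL1Basic {f : ℕ → E} (hf : WeaklyNull f) : ¬ IsL1Basic f := by
  intro hl1
  obtain ⟨c, hc, hle⟩ := hl1.exists_pos_le_norm_of_mem_convexHull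
  have h0 : c ≤ ‖(0 : E)‖ :=
    closure_minimal hle (isClosed_le continuous_const continuous_norm)
      hf.zero_mem_closure_convexHull
  exact hc.not_ge (by simpa using h0)

lemma exists_strictMono_le_apply_of_not_weaklyNull {f : ℕ → E} (hf : ¬ WeaklyNull f) :
    ∃ (g : E →L[ℝ] ℝ) (ε : ℝ), 0 < ε ∧ ∃ φ : ℕ → ℕ, StrictMono φ ∧ ∀ k, ε ≤ g (f (φ k)) := by
  obtain ⟨g, hg⟩ := not_forall.1 hf
  rw [Metric.tendsto_atTop] at hg
  push Not at hg
  obtain ⟨ε, hε, hfar⟩ := hg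
  have hfreq : (∃ᶠ n in atTop, ε ≤ g (f n)) ∨ ∃ᶠ n in atTop, ε ≤ (-g) (f n) := by
    rw [← frequently_or_distrib, frequently_atTop]
    intro N
    obtain ⟨n, hn, hdist⟩ := hfar N
    rw [Real.dist_eq, sub_zero, le_abs'] at hdist
    exact ⟨n, hn, hdist.symm.imp id fun h => by simpa using le_neg_of_le_neg h⟩
  rcases hfreq with hfreq | hfreq
  · obtain ⟨φ, hφ, hle⟩ := extraction_of_frequently_atTop hfreq
    exact ⟨g, ε, hε, φ, hφ, hle⟩
  · obtain ⟨φ, hφ, hle⟩ := extraction_of_frequently_atTop hfreq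
    exact ⟨-g, ε, hε, φ, hφ, hle⟩

end NormedSpace

lemma isL1Basic_of_pairwise_inf_eq_zero {v : ℕ → X} (hv : ∀ n, 0 ≤ v n)
    (hd : Pairwise fun n m => v n ⊓ v m = 0) {g : X →L[ℝ] ℝ} {ε : ℝ} (hε : 0 < ε)
    (hg : ∀ n, ε ≤ g (v n)) : IsL1Basic v := by
  have hg_pos : 0 < ‖g‖ := by
    have : 0 < g (v 0) := hε.trans_le (hg 0)
    exact norm_pos_iff.2 fun h => by simp [h] at this
  refine ⟨‖g‖ / ε, div_pos hg_pos hε, fun m a => ?_⟩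
  rw [one_div_div, div_mul_eq_mul_div, div_le_iff₀ hg_pos]
  calc ε * ∑ k ∈ Finset.range m, |a k|
      ≤ ∑ k ∈ Finset.range m, |a k| * g (v k) := by
        rw [Finset.mul_sum]
        exact Finset.sum_le_sum fun k _ => by
          rw [mul_comm]; exact mul_le_mul_of_nonneg_left (hg k) (abs_nonneg _)
    _ = g (∑ k ∈ Finset.range m, |a k| • v k) := by simp [map_sum, smul_eq_mul]
    _ ≤ ‖g‖ * ‖∑ k ∈ Finset.range m, |a k| • v k‖ := (le_abs_self _).trans (g.le_opNorm _)
    _ = ‖∑ k ∈ Finset.range m, a k • v k‖ * ‖g‖ := by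
        rw [← abs_sum_smul_of_pairwise_inf_eq_zero hv hd, norm_abs_eq_norm, mul_comm]

theorem stmt0_general {X : Type*} [NormedAddCommGroup X] [Lattice X] [HasSolidNorm X] [IsOrderedAddMonoid X] [NormedSpace ℝ X]
    (f : ℕ → X) (hpos : ∀ n, 0 ≤ f n)
    (hdisj : ∀ n m, n ≠ m → f n ⊓ f m = 0) :
    WeaklyNull f ↔ ¬ ∃ φ : ℕ → ℕ, StrictMono φ ∧ IsL1Basic (f ∘ φ) := by
  refine ⟨fun hf ⟨φ, hφ, hl1⟩ => (hf.comp_strictMono hφ).not_isL1Basic hl1, fun hno => ?_⟩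
  by_contra hf
  obtain ⟨g, ε, hε, φ, hφ, hg⟩ := exists_strictMono_le_apply_of_not_weaklyNull hf
  exact hno ⟨φ, hφ, isL1Basic_of_pairwise_inf_eq_zero (fun k => hpos _)
    (fun k l hkl => hdisj _ _ (hφ.injective.ne hkl)) hε hg⟩

/-- A norm bounded disjoint positive sequence in a Banach lattice is weakly
null iff no subsequence is equivalent to the unit vector basis of `ℓ¹`. -/
theorem stmt0 {X : Type*} [NormedAddCommGroup X] [Lattice X] [HasSolidNorm X] [IsOrderedAddMonoid X] [NormedSpace ℝ X] [CompleteSpace X]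
    (f : ℕ → X) (hpos : ∀ n, 0 ≤ f n) (hbdd : ∃ M : ℝ, ∀ n, ‖f n‖ ≤ M)
    (hdisj : ∀ n m, n ≠ m → f n ⊓ f m = 0) :
    WeaklyNull f ↔ ¬ ∃ φ : ℕ → ℕ, StrictMono φ ∧ IsL1Basic (f ∘ φ) :=
  stmt0_general f hpos hdisj
end
end

section
/- A σ-Dedekind complete Banach lattice X is order continuous if and only if for every convex set C ⊆ X, the order closure of C equals the σ(X, X_n^~)-closure of C, where X_n^~ is the order continuous dual. -/
open Filter Topology Pointwise

noncomputable section

variable {X : Type*} [NormedAddCommGroup X] [Lattice X] [HasSolidNorm X] [IsOrderedAddMonoid X]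
  [NormedSpace ℝ X]

variable (X)

/-!
If the norm is order continuous, every norm-continuous functional is order continuous, so by
Hahn–Banach the `σ(X, X_n^~)`-closure of a convex set is contained in its norm closure. A point
of the norm closure is the limit of a sequence from the set with summable distances, and such a
sequence order converges, dominated by the tails of the series. Order convergence always implies
`σ(X, X_n^~)`-convergence.

Conversely, let `f i ↓ 0` with `‖f i‖ ≥ ε > 0` and `u = f i₀`. The upper set `C` generated by the
points `a • u + a⁻¹ • f j` (`a > 0`) is convex because `a ↦ a⁻¹` is convex. Letting first `j`
and then `a → 0`, a diagonal net in `C` tends to `0` in `σ(X, X_n^~)`. But an element of `C` of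
norm at most `M` satisfies `a⁻¹ ε ≤ M`, hence dominates `(ε / (M + 1)) • u`; so every net in `C`
dominated by a net decreasing to `0` has this positive lower bound, and `0` is not an order
limit of points of `C`.
-/

section Nets

/-- Index set of the diagonal net in Kelley's theorem on iterated limits. -/
def DirectedType.diagonal (D : DirectedType) : DirectedType where
  ι := ℕ × (ℕ → D.ι)
  r p q := p.1 ≤ q.1 ∧ ∀ k, D.r (p.2 k) (q.2 k)
  nonempty := let ⟨i⟩ := D.nonempty; ⟨(0, fun _ => i)⟩
  refl _ := ⟨le_rfl, fun _ => D.refl _⟩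
  trans _ _ _ hpq hqs := ⟨hpq.1.trans hqs.1, fun k => D.trans _ _ _ (hpq.2 k) (hqs.2 k)⟩
  directed p q := by
    choose c hc using fun k => D.directed (p.2 k) (q.2 k)
    exact ⟨(max p.1 q.1, c), ⟨le_max_left _ _, fun k => (hc k).1⟩,
      ⟨le_max_right _ _, fun k => (hc k).2⟩⟩

variable {D : DirectedType}

lemma NetTendstoZero.of_abs_le_mul {u v : D.ι → ℝ} (c : ℝ) (hu : NetTendstoZero D u)
    (h : ∀ i, |v i| ≤ c * |u i|) : NetTendstoZero D v := by
  intro ε hε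
  obtain ⟨i₀, hi₀⟩ := hu (ε / (|c| + 1)) (by positivity)
  refine ⟨i₀, fun i hi => ?_⟩
  calc |v i| ≤ |c| * |u i| :=
        (h i).trans (mul_le_mul_of_nonneg_right (le_abs_self c) (abs_nonneg _))
    _ ≤ |c| * (ε / (|c| + 1)) := mul_le_mul_of_nonneg_left (hi₀ i hi).le (abs_nonneg c)
    _ < ε := by
      rw [mul_div_assoc', div_lt_iff₀ (by positivity)]
      nlinarith [abs_nonneg c]

lemma NetTendstoZero.diagonal {u : ℕ → D.ι → ℝ} {v : ℕ → ℝ}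
    (hu : ∀ m, NetTendstoZero D fun j => u m j - v m) (hv : Tendsto v atTop (𝓝 0)) :
    NetTendstoZero D.diagonal fun p => u p.1 (p.2 p.1) := by
  intro ε hε
  obtain ⟨m₀, hm₀⟩ := Metric.tendsto_atTop.mp hv (ε / 2) (half_pos hε)
  choose φ hφ using fun m => hu m (ε / 2) (half_pos hε)
  refine ⟨(m₀, φ), fun ⟨m, ψ⟩ ⟨hm, hψ⟩ => ?_⟩
  have hvm : |v m| < ε / 2 := by simpa [Real.dist_eq] using hm₀ m hm
  linarith [abs_sub_abs_le_abs_sub (u m (ψ m)) (v m), hφ m (ψ m) (hψ m)]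

end Nets

lemma inv_two_pow_smul_nonneg {E : Type*} [AddCommGroup E] [Lattice E] [IsOrderedAddMonoid E]
    [Module ℝ E] {x : E} (hx : 0 ≤ x) (n : ℕ) : 0 ≤ (2⁻¹ : ℝ) ^ n • x := by
  induction n with
  | zero => simpa using hx
  | succ n ih =>
    refine nsmul_two_semiclosed ?_
    rw [two_nsmul, ← add_smul]
    convert ih using 2
    ring

section NormedLattice

variable {E : Type*} [NormedAddCommGroup E] [Lattice E] {D : DirectedType}

lemma OrderConvNet.sub_const {f : D.ι → E} {x : E} (hf : OrderConvNet D f x) :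
    OrderConvNet D (fun i => f i - x) 0 := by
  obtain ⟨F, h, hdec, hglb, hdom⟩ := hf
  exact ⟨F, h, hdec, hglb, by simpa using hdom⟩

section Dual

variable [NormedSpace ℝ E]

lemma OrderConvNet.sigmaNConvNet {f : D.ι → E} {x : E} (hf : OrderConvNet D f x) :
    SigmaNConvNet D f x := fun g hg => by
  simpa only [map_sub] using hg D _ hf.sub_const

lemma orderClosure_subset_sigmaNClosure (C : Set E) : OrderClosure C ⊆ SigmaNClosure C :=
  fun _ ⟨D, f, hfC, hf⟩ => ⟨D, f, hfC, hf.sigmaNConvNet⟩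

lemma sigmaNClosure_subset_closure (hdual : ∀ g : E →L[ℝ] ℝ, InOCDual g) {C : Set E}
    (hC : Convex ℝ C) : SigmaNClosure C ⊆ closure C := by
  rintro x ⟨D, f, hfC, hf⟩
  by_contra hx
  obtain ⟨g, s, hgx, hgC⟩ := geometric_hahn_banach_point_closed hC.closure isClosed_closure hx
  obtain ⟨i, hi⟩ := hf g (hdual g) (s - g x) (sub_pos.mpr hgx)
  have hclose := hi i (D.refl i)
  have hsep := hgC _ (subset_closure (hfC i))
  linarith [le_abs_self (g (f i) - g x)]

def hyperbolicUpperSet (u : E) (f : D.ι → E) : Set E :=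
  {z | ∃ a : ℝ, 0 < a ∧ ∃ j, a • u + a⁻¹ • f j ≤ z}

lemma zero_mem_sigmaNClosure_hyperbolicUpperSet {u : E} {f : D.ι → E}
    (hf : OrderConvNet D f 0) :
    (0 : E) ∈ SigmaNClosure (hyperbolicUpperSet u f) := by
  set a : ℕ → ℝ := fun m => 1 / ((m : ℝ) + 1)
  have ha : ∀ m, 0 < a m := fun m => by positivity
  refine ⟨D.diagonal, fun p => a p.1 • u + (a p.1)⁻¹ • f (p.2 p.1),
    fun p => ⟨a p.1, ha p.1, p.2 p.1, le_rfl⟩, fun g hg => ?_⟩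
  refine NetTendstoZero.diagonal (u := fun m j => g (a m • u + (a m)⁻¹ • f j) - g 0)
    (v := fun m => a m * g u) (fun m => ?_) ?_
  · refine (hg D f hf).of_abs_le_mul (a m)⁻¹ fun j => le_of_eq ?_
    simp [abs_mul, abs_of_pos (ha m)]
  · simpa [a] using tendsto_one_div_add_atTop_nhds_zero_nat.mul_const (g u)

end Dual

variable [IsOrderedAddMonoid E]

lemma OrderConvNet.of_antitone {f : D.ι → E} (hdec : ∀ i j, D.r i j → f j ≤ f i)
    (hglb : IsGLB (Set.range f) 0) : OrderConvNet D f 0 :=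
  ⟨D, f, hdec, hglb, fun γ => ⟨γ, fun i hi => by
    simpa [abs_of_nonneg (hglb.1 ⟨i, rfl⟩)] using hdec γ i hi⟩⟩

variable [HasSolidNorm E]

lemma HasSolidNorm.norm_le_norm_of_nonneg_of_le {x y : E} (hx : 0 ≤ x) (hxy : x ≤ y) :
    ‖x‖ ≤ ‖y‖ :=
  norm_le_norm_of_abs_le_abs (by rwa [abs_of_nonneg hx, abs_of_nonneg (hx.trans hxy)])

lemma OrderConvNet.of_summable {c : ℕ → E} {x : E} (hs : Summable fun n => |c n - x|) :
    OrderConvNet natDir c x := by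
  set d : ℕ → E := fun n => |c n - x|
  have htail : ∀ n, Summable fun k => d (k + n) := fun n => (summable_nat_add_iff n).mpr hs
  refine ⟨natDir, fun n : ℕ => ∑' k, d (k + n), fun (n m : ℕ) (hnm : n ≤ m) => ?_, ⟨?_, ?_⟩,
    fun n : ℕ => ⟨n, fun (i : ℕ) (hi : n ≤ i) => ?_⟩⟩
  · refine (htail m).tsum_le_tsum_of_inj (· + (m - n)) (add_left_injective _)
      (fun _ _ => abs_nonneg _) (fun k => ?_) (htail n)
    rw [add_assoc, Nat.sub_add_cancel hnm]
  · rintro _ ⟨n, rfl⟩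
    exact tsum_nonneg fun _ => abs_nonneg _
  · exact fun b hb => ge_of_tendsto' (tendsto_sum_nat_add d) fun n => hb ⟨n, rfl⟩
  · have := (htail n).le_tsum (i - n) fun _ _ => abs_nonneg _
    rwa [Nat.sub_add_cancel hi] at this

lemma closure_subset_orderClosure [CompleteSpace E] (C : Set E) :
    closure C ⊆ OrderClosure C := by
  intro x hx
  have hnear : ∀ n : ℕ, ∃ c ∈ C, ‖c - x‖ < ((1 : ℝ) / 2) ^ n := fun n => by
    obtain ⟨c, hcC, hc⟩ := Metric.mem_closure_iff.mp hx (((1 : ℝ) / 2) ^ n) (by positivity)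
    exact ⟨c, hcC, by rwa [dist_comm, dist_eq_norm] at hc⟩
  choose c hcC hc using hnear
  refine ⟨natDir, c, hcC, OrderConvNet.of_summable ?_⟩
  exact summable_geometric_two.of_norm_bounded fun n => by
    simpa only [norm_abs_eq_norm] using (hc n).le

lemma OCNorm.netTendstoZero_norm (hoc : OCNorm E) {f : D.ι → E} (hf : OrderConvNet D f 0) :
    NetTendstoZero D fun i => ‖f i‖ := by
  obtain ⟨F, h, hdec, hglb, hdom⟩ := hf
  intro ε hε
  obtain ⟨γ, hγ⟩ := hoc F h hdec hglb ε hε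
  obtain ⟨i₀, hi₀⟩ := hdom γ
  refine ⟨i₀, fun i hi => ?_⟩
  have hle : ‖f i‖ ≤ ‖h γ‖ :=
    norm_le_norm_of_abs_le_abs (by simpa [abs_of_nonneg (hglb.1 ⟨γ, rfl⟩)] using hi₀ i hi)
  simpa using hle.trans_lt (by simpa using hγ γ (F.refl γ))

lemma exists_pos_le_norm_of_not_netTendstoZero {f : D.ι → E} (hf0 : ∀ i, 0 ≤ f i)
    (hdec : ∀ i j, D.r i j → f j ≤ f i) (hf : ¬ NetTendstoZero D fun i => ‖f i‖) :
    ∃ ε > 0, ∀ i, ε ≤ ‖f i‖ := by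
  simp only [NetTendstoZero, not_forall, not_exists, not_lt, abs_norm] at hf
  obtain ⟨ε, hε, hfar⟩ := hf
  refine ⟨ε, hε, fun i => ?_⟩
  obtain ⟨j, hij, hj⟩ := hfar i
  exact hj.trans (HasSolidNorm.norm_le_norm_of_nonneg_of_le (hf0 j) (hdec i j hij))

variable [NormedSpace ℝ E]

/-- Compatibility of the order with real scalars is not part of the structure: it follows from
the closedness of the positive cone, by dyadic approximation of the scalar. -/
instance HasSolidNorm.posSMulMono : PosSMulMono ℝ E := by
  refine PosSMulMono.of_smul_nonneg fun r hr x hx => ?_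
  have hdyadic : Tendsto (fun n : ℕ => (⌊r * 2 ^ n⌋₊ : ℝ) / 2 ^ n) atTop (𝓝 r) :=
    (tendsto_nat_floor_mul_div_atTop hr).comp (tendsto_pow_atTop_atTop_of_one_lt one_lt_two)
  refine isClosed_nonneg.mem_of_tendsto (hdyadic.smul_const x) (Eventually.of_forall fun n => ?_)
  have : ((⌊r * 2 ^ n⌋₊ : ℝ) / 2 ^ n) • x = ⌊r * 2 ^ n⌋₊ • ((2⁻¹ : ℝ) ^ n • x) := by
    rw [← Nat.cast_smul_eq_nsmul ℝ, smul_smul, inv_pow, div_eq_mul_inv]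
  rw [Set.mem_ofPred_eq, this]
  exact nsmul_nonneg (inv_two_pow_smul_nonneg hx n) _

lemma OCNorm.inOCDual (hoc : OCNorm E) (g : E →L[ℝ] ℝ) : InOCDual g := fun _ _ hf =>
  (hoc.netTendstoZero_norm hf).of_abs_le_mul ‖g‖ fun i => by
    simpa only [abs_norm, Real.norm_eq_abs] using g.le_opNorm _

section Counterexample

variable {u : E} {f : D.ι → E}

lemma convex_hyperbolicUpperSet (hf0 : ∀ j, 0 ≤ f j) (hdec : ∀ i j, D.r i j → f j ≤ f i) :
    Convex ℝ (hyperbolicUpperSet u f) := by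
  rintro z ⟨a, ha, i, hz⟩ w ⟨b, hb, j, hw⟩ s t hs ht hst
  obtain ⟨k, hik, hjk⟩ := D.directed i j
  have hpos : 0 < s • a + t • b := convex_Ioi (0 : ℝ) ha hb hs ht hst
  have hjensen : (s • a + t • b)⁻¹ ≤ s • a⁻¹ + t • b⁻¹ := by
    simpa only [zpow_neg_one] using (convexOn_zpow (-1)).2 ha hb hs ht hst
  refine ⟨s • a + t • b, hpos, k, ?_⟩
  calc (s • a + t • b) • u + (s • a + t • b)⁻¹ • f k
      ≤ (s • a + t • b) • u + (s • a⁻¹ + t • b⁻¹) • f k := by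
        gcongr; exact hf0 k
    _ = s • (a • u + a⁻¹ • f k) + t • (b • u + b⁻¹ • f k) := by
        simp only [smul_eq_mul]; module
    _ ≤ s • (a • u + a⁻¹ • f i) + t • (b • u + b⁻¹ • f j) := by
        gcongr
        · exact hdec i k hik
        · exact hdec j k hjk
    _ ≤ s • z + t • w := by gcongr

lemma nonneg_of_mem_hyperbolicUpperSet (hu : 0 ≤ u) (hf0 : ∀ j, 0 ≤ f j) {z : E}
    (hz : z ∈ hyperbolicUpperSet u f) : 0 ≤ z := by
  obtain ⟨a, ha, j, hle⟩ := hz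
  exact (add_nonneg (smul_nonneg ha.le hu) (smul_nonneg (inv_nonneg.mpr ha.le) (hf0 j))).trans hle

lemma smul_le_of_mem_hyperbolicUpperSet (hu : 0 ≤ u) (hf0 : ∀ j, 0 ≤ f j) {ε M : ℝ}
    (hfε : ∀ j, ε ≤ ‖f j‖) {z : E} (hz : z ∈ hyperbolicUpperSet u f) (hzM : ‖z‖ ≤ M) :
    (ε / (M + 1)) • u ≤ z := by
  obtain ⟨a, ha, j, hle⟩ := hz
  have hM : 0 ≤ M := (norm_nonneg z).trans hzM
  have hfj₀ : 0 ≤ a⁻¹ • f j := smul_nonneg (inv_nonneg.mpr ha.le) (hf0 j)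
  have hfj : a⁻¹ • f j ≤ z := (le_add_of_nonneg_left (smul_nonneg ha.le hu)).trans hle
  have hnorm : a⁻¹ * ε ≤ M := calc
    a⁻¹ * ε ≤ a⁻¹ * ‖f j‖ := mul_le_mul_of_nonneg_left (hfε j) (inv_nonneg.mpr ha.le)
    _ = ‖a⁻¹ • f j‖ := by rw [norm_smul, Real.norm_of_nonneg (inv_nonneg.mpr ha.le)]
    _ ≤ ‖z‖ := HasSolidNorm.norm_le_norm_of_nonneg_of_le hfj₀ hfj
    _ ≤ M := hzM
  have ha_ge : ε / (M + 1) ≤ a := by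
    rw [inv_mul_le_iff₀ ha] at hnorm
    rw [div_le_iff₀ (by linarith)]
    nlinarith
  calc (ε / (M + 1)) • u ≤ a • u := smul_le_smul_of_nonneg_right ha_ge hu
    _ ≤ a • u + a⁻¹ • f j := le_add_of_nonneg_right hfj₀
    _ ≤ z := hle

lemma zero_notMem_orderClosure_hyperbolicUpperSet (hu : 0 ≤ u) (hu0 : u ≠ 0)
    (hf0 : ∀ j, 0 ≤ f j) {ε : ℝ} (hε : 0 < ε) (hfε : ∀ j, ε ≤ ‖f j‖) :
    (0 : E) ∉ OrderClosure (hyperbolicUpperSet u f) := by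
  rintro ⟨D', c, hcC, F, h, -, hglb, hdom⟩
  obtain ⟨γ₀⟩ := F.nonempty
  obtain ⟨i₀, hi₀⟩ := hdom γ₀
  have hδ : 0 < ε / (‖h γ₀‖ + 1) := by positivity
  have hlb : (ε / (‖h γ₀‖ + 1)) • u ∈ lowerBounds (Set.range h) := by
    rintro _ ⟨γ, rfl⟩
    obtain ⟨i₁, hi₁⟩ := hdom γ
    obtain ⟨i, h₀i, h₁i⟩ := D'.directed i₀ i₁
    have hc := nonneg_of_mem_hyperbolicUpperSet hu hf0 (hcC i)
    have hc₀ : c i ≤ h γ₀ := by simpa [abs_of_nonneg hc] using hi₀ i h₀i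
    refine (smul_le_of_mem_hyperbolicUpperSet hu hf0 hfε (hcC i)
      (HasSolidNorm.norm_le_norm_of_nonneg_of_le hc hc₀)).trans ?_
    simpa [abs_of_nonneg hc] using hi₁ i h₁i
  have hzero : (ε / (‖h γ₀‖ + 1)) • u = 0 :=
    le_antisymm (hglb.2 hlb) (smul_nonneg hδ.le hu)
  exact hu0 ((smul_eq_zero.mp hzero).resolve_left hδ.ne')

end Counterexample

lemma OCNorm.of_orderClosure_eq_sigmaNClosure
    (h : ∀ C : Set E, Convex ℝ C → OrderClosure C = SigmaNClosure C) : OCNorm E := by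
  intro D f hdec hglb
  by_contra hnot
  have hf0 : ∀ i, 0 ≤ f i := fun i => hglb.1 ⟨i, rfl⟩
  obtain ⟨ε, hε, hfε⟩ := exists_pos_le_norm_of_not_netTendstoZero hf0 hdec hnot
  obtain ⟨i₀⟩ := D.nonempty
  have hu0 : f i₀ ≠ 0 := norm_pos_iff.mp (hε.trans_le (hfε i₀))
  refine zero_notMem_orderClosure_hyperbolicUpperSet (hf0 i₀) hu0 hf0 hε hfε ?_
  rw [h _ (convex_hyperbolicUpperSet hf0 hdec)]
  exact zero_mem_sigmaNClosure_hyperbolicUpperSet (OrderConvNet.of_antitone hdec hglb)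

end NormedLattice

theorem stmt3_general {X : Type*} [NormedAddCommGroup X] [Lattice X] [HasSolidNorm X]
    [IsOrderedAddMonoid X] [NormedSpace ℝ X] [CompleteSpace X] :
    OCNorm X ↔ ∀ C : Set X, Convex ℝ C → OrderClosure C = SigmaNClosure C :=
  ⟨fun hoc C hC => (orderClosure_subset_sigmaNClosure C).antisymm
      ((sigmaNClosure_subset_closure hoc.inOCDual hC).trans (closure_subset_orderClosure C)),
    OCNorm.of_orderClosure_eq_sigmaNClosure⟩

/-- a σ-Dedekind complete Banach lattice is order continuous iff the
order closure of every convex set coincides with its `σ(X, X_n^~)`-closure. -/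
theorem stmt3 {X : Type*} [NormedAddCommGroup X] [Lattice X] [HasSolidNorm X]
    [IsOrderedAddMonoid X] [NormedSpace ℝ X] [CompleteSpace X]
    (hσ : SigmaDedekindComplete X) :
    OCNorm X ↔ ∀ C : Set X, Convex ℝ C → OrderClosure C = SigmaNClosure C :=
  stmt3_general
end
end

section
/- Let X be a Banach lattice. The norm dual X* is order continuous if and only if the order continuous dual X_n^~ is order continuous and X has the disjoint order continuity property (DOCP): every norm bounded disjoint sequence in X₊ that converges to 0 in σ(X, X_n^~) converges weakly to 0. -/
open Filter Topology Pointwise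

noncomputable section

variable {X : Type*} [NormedAddCommGroup X] [Lattice X] [HasSolidNorm X] [IsOrderedAddMonoid X] [NormedSpace ℝ X]

variable (X)

variable {X}
open Filter Topology

section Aux
variable {X : Type*} [NormedAddCommGroup X] [Lattice X] [HasSolidNorm X] [IsOrderedAddMonoid X] [NormedSpace ℝ X]

lemma aux_inf_add_le {a b c : X} (ha : 0 ≤ a) (hb : 0 ≤ b) (hc : 0 ≤ c) :
    (a + b) ⊓ c ≤ a ⊓ c + b ⊓ c := by
  have e : a ⊓ c + b ⊓ c = ((a + b) ⊓ (a + c)) ⊓ ((c + b) ⊓ (c + c)) := by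
    rw [inf_add, add_inf, add_inf]
  rw [e]
  refine le_inf (le_inf inf_le_left (inf_le_right.trans (le_add_of_nonneg_left ha)))
    (le_inf (inf_le_right.trans (le_add_of_nonneg_right hb))
      (inf_le_right.trans (le_add_of_nonneg_left hc)))

lemma aux_nsmul_inf_zero {a b : X} (ha : 0 ≤ a) (hb : 0 ≤ b) (h : a ⊓ b = 0) (n : ℕ) :
    (n • a) ⊓ b = 0 := by
  induction n with
  | zero => simpa using inf_eq_left.2 hb
  | succ n ih =>
    have h1 : (n • a + a) ⊓ b ≤ (n • a) ⊓ b + a ⊓ b :=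
      aux_inf_add_le (nsmul_nonneg ha n) ha hb
    rw [ih, h, add_zero] at h1
    have h2 : 0 ≤ ((n+1) • a) ⊓ b := le_inf (nsmul_nonneg ha (n+1)) hb
    rw [succ_nsmul]
    exact le_antisymm h1 (by simpa [succ_nsmul] using h2)

lemma aux_nsmul_cancel {n : ℕ} (hn : n ≠ 0) {y : X} (h : 0 ≤ n • y) : 0 ≤ y := by
  have hd : ((n • y⁺) ⊓ y⁻ : X) = 0 :=
    aux_nsmul_inf_zero (posPart_nonneg y) (negPart_nonneg y) (posPart_inf_negPart_eq_zero y) n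
  have hsub : n • y = n • y⁺ - n • y⁻ := by
    rw [← nsmul_sub, posPart_sub_negPart]
  have hle : n • y⁻ ≤ n • y⁺ := by rwa [hsub, sub_nonneg] at h
  obtain ⟨m, rfl⟩ := Nat.exists_eq_succ_of_ne_zero hn
  have hb : y⁻ ≤ (m+1) • y⁻ := by
    rw [succ_nsmul]
    exact le_add_of_nonneg_left (nsmul_nonneg (negPart_nonneg y) m)
  have h0 : y⁻ ⊓ ((m+1) • y⁺) = y⁻ := inf_eq_left.2 (hb.trans (by simpa using hle))
  have hneg : y⁻ = 0 := by
    rw [← h0, inf_comm]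
    simpa using hd
  have hy := posPart_sub_negPart y
  rw [hneg, sub_zero] at hy
  rw [← hy]
  exact posPart_nonneg y

lemma aux_rat_smul_nonneg {x : X} (hx : 0 ≤ x) {q : ℚ} (hq : 0 ≤ q) : 0 ≤ (q : ℝ) • x := by
  set m : ℕ := q.num.toNat with hm
  have hnum : (m : ℤ) = q.num := Int.toNat_of_nonneg (Rat.num_nonneg.2 hq)
  have key : (q.den : ℝ) * (q : ℝ) = (m : ℝ) := by
    have : (q.den : ℚ) * q = (q.num : ℚ) := by
      rw [mul_comm]
      exact_mod_cast Rat.mul_den_eq_num q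
    have := congrArg (fun r : ℚ => (r : ℝ)) this
    push_cast at this ⊢
    rw [this, ← hnum]
    push_cast
    ring
  refine aux_nsmul_cancel (n := q.den) q.den_nz ?_
  rw [← Nat.cast_smul_eq_nsmul ℝ q.den ((q:ℝ) • x), smul_smul, key,
    Nat.cast_smul_eq_nsmul ℝ m x]
  exact nsmul_nonneg hx m

lemma aux_smul_nonneg {c : ℝ} (hc : 0 ≤ c) {x : X} (hx : 0 ≤ x) : 0 ≤ c • x := by
  have hseq : ∀ n : ℕ, ∃ q : ℚ, c < (q:ℝ) ∧ (q:ℝ) < c + 1/(n+1) := by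
    intro n
    refine exists_rat_btwn ?_
    have h0 : (0:ℝ) < 1/((n:ℝ)+1) := by positivity
    linarith
  choose q hq1 hq2 using hseq
  have htend : Tendsto (fun n : ℕ => ((q n : ℝ))) atTop (𝓝 c) := by
    have h1 : Tendsto (fun n : ℕ => c + 1/((n:ℝ)+1)) atTop (𝓝 c) := by
      have := tendsto_one_div_add_atTop_nhds_zero_nat (𝕜 := ℝ)
      simpa using (tendsto_const_nhds (x := c)).add this
    exact tendsto_of_tendsto_of_tendsto_of_le_of_le tendsto_const_nhds h1
      (fun n => (hq1 n).le) (fun n => (hq2 n).le)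
  have htend2 : Tendsto (fun n : ℕ => ((q n : ℝ)) • x) atTop (𝓝 (c • x)) :=
    htend.smul_const x
  exact ge_of_tendsto htend2 (Eventually.of_forall fun n =>
    aux_rat_smul_nonneg hx (by exact_mod_cast (hc.trans (hq1 n).le)))

lemma aux_smul_le_smul {c : ℝ} (hc : 0 ≤ c) {x y : X} (h : x ≤ y) : c • x ≤ c • y := by
  have := aux_smul_nonneg hc (sub_nonneg.2 h)
  rwa [smul_sub, sub_nonneg] at this

lemma aux_smul_inf {c : ℝ} (hc : 0 < c) (x y : X) : c • (x ⊓ y) = (c • x) ⊓ (c • y) := by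
  refine le_antisymm (le_inf (aux_smul_le_smul hc.le inf_le_left)
    (aux_smul_le_smul hc.le inf_le_right)) ?_
  have h2 : c⁻¹ • ((c • x) ⊓ (c • y)) ≤ x ⊓ y := by
    refine le_inf ?_ ?_
    · have := aux_smul_le_smul (c := c⁻¹) (by positivity) (inf_le_left (a := c • x) (b := c • y))
      rwa [smul_smul, inv_mul_cancel₀ hc.ne', one_smul] at this
    · have := aux_smul_le_smul (c := c⁻¹) (by positivity) (inf_le_right (a := c • x) (b := c • y))
      rwa [smul_smul, inv_mul_cancel₀ hc.ne', one_smul] at this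
  have := aux_smul_le_smul hc.le h2
  rwa [smul_smul, mul_inv_cancel₀ hc.ne', one_smul] at this

lemma aux_smul_posPart {c : ℝ} (hc : 0 < c) (x : X) : c • x⁺ = (c • x)⁺ := by
  have : x⁺ = -((-x) ⊓ 0) := by
    rw [neg_inf, neg_neg, neg_zero, posPart_def]
  rw [this, smul_neg, aux_smul_inf hc, smul_zero, smul_neg, neg_inf, neg_neg, neg_zero,
    posPart_def]

lemma aux_smul_inf_zero {a b : X} (ha : 0 ≤ a) (hb : 0 ≤ b) (h : a ⊓ b = 0) {c : ℝ}
    (hc : 0 ≤ c) : a ⊓ (c • b) = 0 := by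
  have h1 : c • b ≤ (⌈c⌉₊ : ℕ) • b := by
    rw [← Nat.cast_smul_eq_nsmul ℝ]
    exact aux_smul_le_smul (c := c) hc (le_refl b) |>.trans_eq rfl |>.trans
      (by
        have := aux_smul_nonneg (c := (⌈c⌉₊ : ℝ) - c) (sub_nonneg.2 (Nat.le_ceil c)) hb
        rw [sub_smul, sub_nonneg] at this
        exact this)
  have h2 : a ⊓ (c • b) ≤ a ⊓ ((⌈c⌉₊ : ℕ) • b) := inf_le_inf_left a h1
  have h3 : a ⊓ ((⌈c⌉₊ : ℕ) • b) = 0 := by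
    rw [inf_comm]
    exact aux_nsmul_inf_zero hb ha (by rw [inf_comm]; exact h) _
  exact le_antisymm (h2.trans_eq h3) (le_inf ha (aux_smul_nonneg hc hb))

end Aux

set_option linter.unusedSectionVars false
set_option maxHeartbeats 1000000

section DualAux
variable {X : Type*} [NormedAddCommGroup X] [Lattice X] [HasSolidNorm X] [IsOrderedAddMonoid X] [NormedSpace ℝ X]

lemma aux_posPart_le_abs (x : X) : x⁺ ≤ |x| := by
  rw [posPart_def]
  exact sup_le (le_abs_self x) (abs_nonneg x)

lemma aux_negPart_le_abs (x : X) : x⁻ ≤ |x| := by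
  have := aux_posPart_le_abs (-x)
  rwa [posPart_neg, abs_neg] at this

lemma aux_mono {g : X →L[ℝ] ℝ} (hg : dualLE 0 g) {a b : X} (h : a ≤ b) : g a ≤ g b := by
  have := hg (b - a) (sub_nonneg.2 h)
  simp only [ContinuousLinearMap.zero_apply, map_sub] at this
  linarith

lemma aux_abs_apply_le {g : X →L[ℝ] ℝ} (hg : dualLE 0 g) (x : X) : |g x| ≤ g |x| := by
  have h1 : g x ≤ g |x| := aux_mono hg (le_abs_self x)
  have h2 : g (-x) ≤ g |x| := aux_mono hg (neg_le_abs x)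
  rw [map_neg] at h2
  exact abs_le.2 ⟨by linarith, h1⟩

lemma aux_norm_le_of_le {a b : X} (ha : 0 ≤ a) (h : a ≤ b) : ‖a‖ ≤ ‖b‖ :=
  norm_le_norm_of_abs_le_abs (by
    rw [abs_of_nonneg ha, abs_of_nonneg (ha.trans h)]
    exact h)

lemma aux_dual_norm_le {g h : X →L[ℝ] ℝ} (hg0 : dualLE 0 g) (hgh : dualLE g h) : ‖g‖ ≤ ‖h‖ := by
  refine ContinuousLinearMap.opNorm_le_bound g (norm_nonneg h) fun x => ?_
  have h1 : |g x| ≤ g |x| := aux_abs_apply_le hg0 x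
  have h2 : g |x| ≤ h |x| := hgh _ (abs_nonneg x)
  have h3 : h |x| ≤ ‖h‖ * ‖|x|‖ := (le_abs_self _).trans (h.le_opNorm _)
  rw [norm_abs_eq_norm] at h3
  calc ‖g x‖ = |g x| := rfl
  _ ≤ ‖h‖ * ‖x‖ := by linarith

lemma aux_abs_orderConv {D : DirectedType} {f : D.ι → X} (h : OrderConvNet D f 0) :
    OrderConvNet D (fun i => |f i|) 0 := by
  obtain ⟨E, w, hdec, hglb, hdom⟩ := h
  refine ⟨E, w, hdec, hglb, fun γ => ?_⟩
  obtain ⟨i₀, hi₀⟩ := hdom γ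
  exact ⟨i₀, fun i hi => by simpa [abs_abs] using hi₀ i hi⟩

lemma aux_ocdual_dominated {g h : X →L[ℝ] ℝ} (hg : InOCDual g)
    (hdom : ∀ x : X, |h x| ≤ g |x|) : InOCDual h := by
  intro D f hf ε hε
  obtain ⟨i₀, hi₀⟩ := hg D (fun i => |f i|) (aux_abs_orderConv hf) ε hε
  refine ⟨i₀, fun i hi => ?_⟩
  have h1 : |h (f i)| ≤ g (|f i|) := hdom (f i)
  have h2 : g (|f i|) ≤ |g (|f i|)| := le_abs_self _
  have h3 : |g (|f i|)| < ε := by simpa using hi₀ i hi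
  linarith

lemma aux_ocdual_sub {g h : X →L[ℝ] ℝ} (hg : InOCDual g) (hh : InOCDual h) :
    InOCDual (g - h) := by
  intro D f hf ε hε
  obtain ⟨i₁, hi₁⟩ := hg D f hf (ε/2) (by linarith)
  obtain ⟨i₂, hi₂⟩ := hh D f hf (ε/2) (by linarith)
  obtain ⟨i₀, h₀₁, h₀₂⟩ := D.directed i₁ i₂
  refine ⟨i₀, fun i hi => ?_⟩
  have a1 := hi₁ i (D.trans _ _ _ h₀₁ hi)
  have a2 := hi₂ i (D.trans _ _ _ h₀₂ hi)
  simp only [ContinuousLinearMap.sub_apply]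
  calc |g (f i) - h (f i)| ≤ |g (f i)| + |h (f i)| := abs_sub _ _
  _ < ε := by linarith

lemma aux_le_of_forall_sub {a b : ℝ} (h : ∀ ε : ℝ, 0 < ε → a - ε ≤ b) : a ≤ b := by
  by_contra hc
  push_neg at hc
  have := h ((a - b)/2) (by linarith)
  linarith

/-- Kantorovich-type extension. -/
lemma aux_extend_pos (q : X → ℝ)
    (hadd : ∀ x y : X, 0 ≤ x → 0 ≤ y → q (x + y) = q x + q y)
    (hhom : ∀ (c : ℝ) (x : X), 0 < c → 0 ≤ x → q (c • x) = c * q x)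
    (C : ℝ) (hbd : ∀ x : X, 0 ≤ x → |q x| ≤ C * ‖x‖) :
    ∃ Q : X →L[ℝ] ℝ, ∀ x : X, Q x = q x⁺ - q x⁻ := by
  have hq0 : q 0 = 0 := by
    have := hadd 0 0 le_rfl le_rfl
    simp only [add_zero] at this
    linarith
  have key : ∀ a b : X, (a+b)⁺ + (a⁻ + b⁻) = (a+b)⁻ + (a⁺ + b⁺) := by
    intro a b
    have e : (a+b)⁺ + (a⁻ + b⁻) - ((a+b)⁻ + (a⁺ + b⁺)) =
        ((a+b)⁺ - (a+b)⁻) - ((a⁺ - a⁻) + (b⁺ - b⁻)) := by abel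
    have e2 : (a+b)⁺ + (a⁻ + b⁻) - ((a+b)⁻ + (a⁺ + b⁺)) = 0 := by
      rw [e, posPart_sub_negPart, posPart_sub_negPart, posPart_sub_negPart]
      abel
    have := sub_eq_zero.1 e2
    exact this
  have hadd3 : ∀ a b c : X, 0 ≤ a → 0 ≤ b → 0 ≤ c → q (a + (b + c)) = q a + q b + q c := by
    intro a b c ha hb hc
    rw [hadd a (b+c) ha (add_nonneg hb hc), hadd b c hb hc]
    ring
  have Qadd : ∀ a b : X, q (a+b)⁺ - q (a+b)⁻ = (q a⁺ - q a⁻) + (q b⁺ - q b⁻) := by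
    intro a b
    have h1 := congrArg q (key a b)
    rw [hadd3 _ _ _ (posPart_nonneg _) (negPart_nonneg _) (negPart_nonneg _),
      hadd3 _ _ _ (negPart_nonneg _) (posPart_nonneg _) (posPart_nonneg _)] at h1
    linarith
  have Qsmul : ∀ (c : ℝ) (z : X), q (c • z)⁺ - q (c • z)⁻ = c * (q z⁺ - q z⁻) := by
    intro c z
    rcases lt_trichotomy c 0 with hc | hc | hc
    · have hd : 0 < -c := by linarith
      have e1 : (c • z)⁺ = (-c) • z⁻ := by
        calc (c • z)⁺ = ((-c) • (-z))⁺ := by rw [neg_smul, smul_neg, neg_neg]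
        _ = (-c) • (-z)⁺ := (aux_smul_posPart hd _).symm
        _ = (-c) • z⁻ := by rw [posPart_neg]
      have e2 : (c • z)⁻ = (-c) • z⁺ := by
        calc (c • z)⁻ = (-(c • z))⁺ := (posPart_neg _).symm
        _ = ((-c) • z)⁺ := by rw [neg_smul]
        _ = (-c) • z⁺ := (aux_smul_posPart hd _).symm
      rw [e1, e2, hhom _ _ hd (negPart_nonneg z), hhom _ _ hd (posPart_nonneg z)]
      ring
    · subst hc
      simp only [zero_smul, zero_mul]
      have : ((0:X))⁺ = 0 := by simp
      have h2 : ((0:X))⁻ = 0 := by simp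
      rw [this, h2, hq0]
      ring
    · have e1 : (c • z)⁺ = c • z⁺ := (aux_smul_posPart hc z).symm
      have e2 : (c • z)⁻ = c • z⁻ := by
        calc (c • z)⁻ = (-(c • z))⁺ := (posPart_neg _).symm
        _ = (c • (-z))⁺ := by rw [smul_neg]
        _ = c • (-z)⁺ := (aux_smul_posPart hc _).symm
        _ = c • z⁻ := by rw [posPart_neg]
      rw [e1, e2, hhom _ _ hc (posPart_nonneg z), hhom _ _ hc (negPart_nonneg z)]
      ring
  set Qlin : X →ₗ[ℝ] ℝ :=
    { toFun := fun z => q z⁺ - q z⁻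
      map_add' := fun a b => Qadd a b
      map_smul' := fun c z => by simpa using Qsmul c z }
  have hCnn : (0:ℝ) ≤ |C| := abs_nonneg C
  refine ⟨Qlin.mkContinuous (2 * |C|) fun z => ?_, fun x => rfl⟩
  have b1 : |q z⁺| ≤ |C| * ‖z‖ := by
    have := hbd z⁺ (posPart_nonneg z)
    have h2 : ‖(z⁺ : X)‖ ≤ ‖z‖ := by
      rw [← norm_abs_eq_norm z]
      exact aux_norm_le_of_le (posPart_nonneg z) (aux_posPart_le_abs z)
    calc |q z⁺| ≤ C * ‖z⁺‖ := this
    _ ≤ |C| * ‖z‖ := by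
        nlinarith [norm_nonneg (z⁺ : X), le_abs_self C, abs_nonneg C]
  have b2 : |q z⁻| ≤ |C| * ‖z‖ := by
    have := hbd z⁻ (negPart_nonneg z)
    have h2 : ‖(z⁻ : X)‖ ≤ ‖z‖ := by
      rw [← norm_abs_eq_norm z]
      exact aux_norm_le_of_le (negPart_nonneg z) (aux_negPart_le_abs z)
    calc |q z⁻| ≤ C * ‖z⁻‖ := this
    _ ≤ |C| * ‖z‖ := by
        nlinarith [norm_nonneg (z⁻ : X), le_abs_self C, abs_nonneg C]
  have : |q z⁺ - q z⁻| ≤ 2 * |C| * ‖z‖ := by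
    have := abs_sub (q z⁺) (q z⁻)
    calc |q z⁺ - q z⁻| ≤ |q z⁺| + |q z⁻| := abs_sub _ _
    _ ≤ 2 * |C| * ‖z‖ := by linarith
  exact this

end DualAux

section Series
variable {X : Type*} [NormedAddCommGroup X] [Lattice X] [HasSolidNorm X] [IsOrderedAddMonoid X] [NormedSpace ℝ X]

lemma aux_disjoint_sum_inf {F : Finset ℕ} {y : ℕ → X} {w : X}
    (hy : ∀ n ∈ F, 0 ≤ y n) (hw : 0 ≤ w) (hd : ∀ n ∈ F, y n ⊓ w = 0) :
    (∑ n ∈ F, y n) ⊓ w = 0 := by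
  induction F using Finset.induction_on with
  | empty => simpa using inf_eq_left.2 hw
  | @insert a F hnot ih =>
    rw [Finset.sum_insert hnot]
    have h1 : (y a + ∑ n ∈ F, y n) ⊓ w ≤ y a ⊓ w + (∑ n ∈ F, y n) ⊓ w :=
      aux_inf_add_le (hy a (Finset.mem_insert_self a F))
        (Finset.sum_nonneg fun n hn => hy n (Finset.mem_insert_of_mem hn)) hw
    rw [hd a (Finset.mem_insert_self a F),
      ih (fun n hn => hy n (Finset.mem_insert_of_mem hn))
        (fun n hn => hd n (Finset.mem_insert_of_mem hn)), add_zero] at h1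
    exact le_antisymm h1 (le_inf
      (add_nonneg (hy a (Finset.mem_insert_self a F))
        (Finset.sum_nonneg fun n hn => hy n (Finset.mem_insert_of_mem hn))) hw)

lemma aux_disjoint_sum_le {F : Finset ℕ} {y : ℕ → X} {z : X}
    (hy : ∀ n ∈ F, 0 ≤ y n) (hd : ∀ n ∈ F, ∀ m ∈ F, n ≠ m → y n ⊓ y m = 0)
    (hz : ∀ n ∈ F, y n ≤ z) (hz0 : 0 ≤ z) : ∑ n ∈ F, y n ≤ z := by
  induction F using Finset.induction_on with
  | empty => simpa using hz0
  | @insert a F hnot ih =>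
    rw [Finset.sum_insert hnot]
    have hdisj : (∑ n ∈ F, y n) ⊓ y a = 0 :=
      aux_disjoint_sum_inf (fun n hn => hy n (Finset.mem_insert_of_mem hn))
        (hy a (Finset.mem_insert_self a F))
        (fun n hn => hd n (Finset.mem_insert_of_mem hn) a (Finset.mem_insert_self a F)
          (fun he => hnot (he ▸ hn)))
    have key : y a + ∑ n ∈ F, y n = (y a ⊓ ∑ n ∈ F, y n) + (y a ⊔ ∑ n ∈ F, y n) :=
      (inf_add_sup _ _).symm
    rw [key, inf_comm, hdisj, zero_add]
    exact sup_le (hz a (Finset.mem_insert_self a F))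
      (ih (fun n hn => hy n (Finset.mem_insert_of_mem hn))
        (fun n hn m hm hnm => hd n (Finset.mem_insert_of_mem hn) m (Finset.mem_insert_of_mem hm) hnm)
        (fun n hn => hz n (Finset.mem_insert_of_mem hn)))

/-- The Finset ℕ directed type. -/
def finDir : DirectedType where
  ι := Finset ℕ
  r := (· ⊆ ·)
  nonempty := ⟨∅⟩
  refl := fun _ => subset_rfl
  trans := fun _ _ _ h1 h2 => h1.trans h2
  directed := fun a b => ⟨a ∪ b, Finset.subset_union_left, Finset.subset_union_right⟩

/-- Core series argument: if the dual norm is order continuous on `S`, then any positive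
functional in the "ideal" `S` kills norm bounded disjoint sequences. -/
lemma aux_series {X : Type*} [NormedAddCommGroup X] [Lattice X] [HasSolidNorm X] [IsOrderedAddMonoid X] [NormedSpace ℝ X]
    (S : Set (X →L[ℝ] ℝ)) (hS : DualOCOn S) (g : X →L[ℝ] ℝ)
    (hg0 : dualLE 0 g)
    (hmem : ∀ h : X →L[ℝ] ℝ, dualLE 0 h → dualLE h g → h ∈ S)
    (x : ℕ → X) (hx0 : ∀ n, 0 ≤ x n) (M : ℝ) (hM : ∀ n, ‖x n‖ ≤ M)
    (hdisj : ∀ n m, n ≠ m → x n ⊓ x m = 0) :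
    Tendsto (fun n => g (x n)) atTop (𝓝 0) := by
  classical
  set q : ℕ → X → ℝ := fun n z => ⨆ k : ℕ, g ((k • x n) ⊓ z) with hq
  have hterm_le : ∀ n (k : ℕ) {z : X}, 0 ≤ z → g ((k • x n) ⊓ z) ≤ g z := by
    intro n k z hz
    exact aux_mono hg0 inf_le_right
  have hbdd : ∀ n {z : X}, 0 ≤ z → BddAbove (Set.range fun k : ℕ => g ((k • x n) ⊓ z)) := by
    intro n z hz
    exact ⟨g z, by rintro r ⟨k, rfl⟩; exact hterm_le n k hz⟩
  have hq_le_g : ∀ n {z : X}, 0 ≤ z → q n z ≤ g z := by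
    intro n z hz
    exact ciSup_le fun k => hterm_le n k hz
  have hq_nonneg : ∀ n {z : X}, 0 ≤ z → 0 ≤ q n z := by
    intro n z hz
    have h0 : g (((0:ℕ) • x n) ⊓ z) = 0 := by
      rw [zero_smul, inf_eq_left.2 hz, map_zero]
    have := le_ciSup (hbdd n hz) 0
    rw [h0] at this
    exact this
  have mono_nsmul : ∀ n {k l : ℕ}, k ≤ l → (k • x n : X) ≤ l • x n := by
    intro n k l h
    have h1 : k • x n + (l - k) • x n = l • x n := by
      rw [← add_nsmul, Nat.add_sub_cancel' h]
    rw [← h1]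
    exact le_add_of_nonneg_right (nsmul_nonneg (hx0 n) _)
  have hq_mono_k : ∀ n {z : X}, 0 ≤ z → ∀ {k l : ℕ}, k ≤ l →
      g ((k • x n) ⊓ z) ≤ g ((l • x n) ⊓ z) := by
    intro n z hz k l hkl
    exact aux_mono hg0 (inf_le_inf_right z (mono_nsmul n hkl))
  have hsmul_le : ∀ n (c : ℝ), 0 ≤ c → (c • x n : X) ≤ (⌈c⌉₊ : ℕ) • x n := by
    intro n c hc
    have h1 : (0:X) ≤ ((⌈c⌉₊:ℝ) - c) • x n :=
      aux_smul_nonneg (sub_nonneg.2 (Nat.le_ceil c)) (hx0 n)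
    rw [sub_smul, sub_nonneg, Nat.cast_smul_eq_nsmul] at h1
    exact h1
  -- homogeneity
  have hqle : ∀ n {z : X} (c : ℝ), 0 ≤ z → 0 < c → q n (c • z) ≤ c * q n z := by
    intro n z c hz hc
    refine ciSup_le fun k => ?_
    have e2 : ((k:ℕ) • x n : X) ⊓ (c • z) = c • ((((c⁻¹ * (k:ℝ))) • x n) ⊓ z) := by
      rw [aux_smul_inf hc, smul_smul,
        show c * (c⁻¹ * (k:ℝ)) = ((k:ℕ):ℝ) by field_simp, Nat.cast_smul_eq_nsmul]
    rw [e2, map_smul, smul_eq_mul]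
    have h3 : (((c⁻¹ * k) • x n : X)) ⊓ z ≤ ((⌈c⁻¹ * k⌉₊ : ℕ) • x n) ⊓ z :=
      inf_le_inf_right z (hsmul_le n _ (by positivity))
    have h4 : g ((((c⁻¹ * k) • x n : X)) ⊓ z) ≤ q n z :=
      (aux_mono hg0 h3).trans (le_ciSup (hbdd n hz) _)
    exact mul_le_mul_of_nonneg_left h4 hc.le
  have hqhom : ∀ n {z : X} (c : ℝ), 0 ≤ z → 0 < c → q n (c • z) = c * q n z := by
    intro n z c hz hc
    refine le_antisymm (hqle n c hz hc) ?_
    have h5 := hqle n (c := c⁻¹) (aux_smul_nonneg hc.le hz) (by positivity)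
    rw [smul_smul, inv_mul_cancel₀ hc.ne', one_smul] at h5
    have h6 := mul_le_mul_of_nonneg_left h5 hc.le
    rw [← mul_assoc, mul_inv_cancel₀ hc.ne', one_mul] at h6
    exact h6
  have hqadd : ∀ n {z w : X}, 0 ≤ z → 0 ≤ w → q n (z + w) = q n z + q n w := by
    intro n z w hz hw
    have hzw : (0:X) ≤ z + w := add_nonneg hz hw
    refine le_antisymm (ciSup_le fun k => ?_) (aux_le_of_forall_sub fun ε hε => ?_)
    · have h1 : ((k:ℕ) • x n : X) ⊓ (z + w) ≤ z ⊓ (k • x n) + w ⊓ (k • x n) := by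
        rw [inf_comm]
        exact aux_inf_add_le hz hw (nsmul_nonneg (hx0 n) k)
      have h2 := aux_mono hg0 h1
      rw [map_add] at h2
      have h3 : g (z ⊓ (k • x n)) ≤ q n z := by
        rw [inf_comm]; exact le_ciSup (hbdd n hz) k
      have h4 : g (w ⊓ (k • x n)) ≤ q n w := by
        rw [inf_comm]; exact le_ciSup (hbdd n hw) k
      linarith
    · obtain ⟨k, hk⟩ : ∃ k : ℕ, q n z - ε/2 < g ((k • x n) ⊓ z) :=
        exists_lt_of_lt_ciSup (show q n z - ε/2 < q n z by linarith)
      obtain ⟨l, hl⟩ : ∃ l : ℕ, q n w - ε/2 < g ((l • x n) ⊓ w) :=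
        exists_lt_of_lt_ciSup (show q n w - ε/2 < q n w by linarith)
      have h1 : (k • x n : X) ⊓ z + (l • x n) ⊓ w ≤ ((k+l) • x n) ⊓ (z + w) := by
        refine le_inf ?_ (add_le_add inf_le_right inf_le_right)
        rw [add_nsmul]
        exact add_le_add inf_le_left inf_le_left
      have h2 := aux_mono hg0 h1
      rw [map_add] at h2
      have h3 : g (((k+l) • x n) ⊓ (z + w)) ≤ q n (z + w) := le_ciSup (hbdd n hzw) _
      linarith
  have hq_zero : ∀ n, q n 0 = 0 := by
    intro n
    have : ∀ k : ℕ, g ((k • x n) ⊓ (0:X)) = 0 := by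
      intro k
      rw [inf_eq_right.2 (nsmul_nonneg (hx0 n) k), map_zero]
    simp only [hq, this]
    exact ciSup_const
  have hqbd : ∀ n (z : X), 0 ≤ z → |q n z| ≤ ‖g‖ * ‖z‖ := by
    intro n z hz
    have h1 := hq_nonneg n hz
    have h2 := hq_le_g n hz
    have h3 : g z ≤ ‖g‖ * ‖z‖ := (le_abs_self _).trans (g.le_opNorm z)
    rw [abs_of_nonneg h1]
    linarith
  choose θ hθ using fun n => aux_extend_pos (q n) (fun z w hz hw => hqadd n hz hw)
    (fun c z hc hz => hqhom n c hz hc) (‖g‖) (fun z hz => hqbd n z hz)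
  have hθcone : ∀ n (z : X), 0 ≤ z → θ n z = q n z := by
    intro n z hz
    rw [hθ n z, posPart_eq_self.2 hz, negPart_eq_zero.2 hz, hq_zero n, sub_zero]
  have hθ0 : ∀ n, dualLE 0 (θ n) := by
    intro n z hz
    rw [hθcone n z hz]
    simpa using hq_nonneg n hz
  have hθg : ∀ n, dualLE (θ n) g := by
    intro n z hz
    rw [hθcone n z hz]
    exact hq_le_g n hz
  have hθx : ∀ n, θ n (x n) = g (x n) := by
    intro n
    rw [hθcone n (x n) (hx0 n)]
    refine le_antisymm (ciSup_le fun k => hterm_le n k (hx0 n)) ?_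
    have h1 : ((1:ℕ) • x n : X) ⊓ x n = x n := by
      rw [one_nsmul, inf_idem]
    have := le_ciSup (hbdd n (hx0 n)) 1
    rw [h1] at this
    exact this
  -- finite sums are dominated by g
  have hsum_le : ∀ (F : Finset ℕ) (z : X), 0 ≤ z → ∑ n ∈ F, θ n z ≤ g z := by
    intro F z hz
    have hK : ∀ K : ℕ, ∑ n ∈ F, g ((K • x n) ⊓ z) ≤ g z := by
      intro K
      have hy0 : ∀ n ∈ F, (0:X) ≤ (K • x n) ⊓ z := fun n _ =>
        le_inf (nsmul_nonneg (hx0 n) K) hz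
      have hyd : ∀ n ∈ F, ∀ m ∈ F, n ≠ m → ((K • x n) ⊓ z) ⊓ ((K • x m) ⊓ z) = 0 := by
        intro n _ m _ hnm
        have h1 : ((K • x n : X)) ⊓ (x m) = 0 :=
          aux_nsmul_inf_zero (hx0 n) (hx0 m) (hdisj n m hnm) K
        have h2 : ((K • x m : X)) ⊓ (K • x n) = 0 := by
          rw [inf_comm] at h1
          exact aux_nsmul_inf_zero (hx0 m) (nsmul_nonneg (hx0 n) K) h1 K
        rw [inf_comm] at h2
        refine le_antisymm ?_ (le_inf (hy0 n ‹n ∈ F›) (hy0 m ‹m ∈ F›))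
        calc ((K • x n : X)) ⊓ z ⊓ ((K • x m) ⊓ z) ≤ (K • x n) ⊓ (K • x m) :=
          inf_le_inf inf_le_left inf_le_left
        _ = 0 := h2
      have hyz : ∀ n ∈ F, ((K • x n : X)) ⊓ z ≤ z := fun n _ => inf_le_right
      have hsum : ∑ n ∈ F, ((K • x n : X)) ⊓ z ≤ z := aux_disjoint_sum_le hy0 hyd hyz hz
      have := aux_mono hg0 hsum
      rw [map_sum] at this
      exact this
    simp only [hθcone _ _ hz]
    refine aux_le_of_forall_sub fun ε hε => ?_
    have hchoice : ∀ n : ℕ, ∃ k : ℕ, q n z - ε/(F.card + 1) < g ((k • x n) ⊓ z) := by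
      intro n
      exact exists_lt_of_lt_ciSup
        (show q n z - ε/(F.card + 1) < q n z by
          have : (0:ℝ) < ε/(F.card + 1) := by positivity
          linarith)
    choose k hk using hchoice
    set K := F.sup k with hKdef
    have h1 : ∑ n ∈ F, q n z ≤ ∑ n ∈ F, (g ((K • x n) ⊓ z) + ε/(F.card + 1)) := by
      refine Finset.sum_le_sum fun n hn => ?_
      have := (hk n).le.trans (hq_mono_k n hz (Finset.le_sup hn))
      linarith
    rw [Finset.sum_add_distrib, Finset.sum_const, nsmul_eq_mul] at h1
    have h2 : (F.card : ℝ) * (ε/(F.card + 1)) ≤ ε := by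
      rw [div_eq_inv_mul]
      have hc : (0:ℝ) < (F.card : ℝ) + 1 := by positivity
      rw [mul_comm ((F.card : ℝ) + 1)⁻¹ ε, ← mul_assoc]
      have : (F.card : ℝ) * ε ≤ ((F.card:ℝ) + 1) * ε := by nlinarith [hε.le]
      calc (F.card : ℝ) * ε * ((F.card:ℝ) + 1)⁻¹ ≤ ((F.card:ℝ)+1) * ε * ((F.card:ℝ)+1)⁻¹ := by
            apply mul_le_mul_of_nonneg_right this (by positivity)
      _ = ε := by field_simp
    have := hK K
    linarith
  -- summability
  have hsummable_abs : ∀ z : X, Summable fun n => θ n (|z|) := by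
    intro z
    refine summable_of_sum_range_le (c := g (|z|)) (fun n => hθ0 n (|z|) (abs_nonneg z)) fun N => ?_
    exact hsum_le (Finset.range N) (|z|) (abs_nonneg z)
  have hsummable : ∀ z : X, Summable fun n => θ n z := by
    intro z
    refine Summable.of_abs ?_
    refine Summable.of_nonneg_of_le (fun n => abs_nonneg _)
      (fun n => (aux_abs_apply_le (hθ0 n) z)) (hsummable_abs z)
  have htsum_le : ∀ z : X, 0 ≤ z → (∑' n, θ n z) ≤ g z := by
    intro z hz
    exact Real.tsum_le_of_sum_range_le (fun n => hθ0 n z hz)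
      (fun N => hsum_le (Finset.range N) z hz)
  set Tlin : X →ₗ[ℝ] ℝ :=
    { toFun := fun z => ∑' n, θ n z
      map_add' := fun a b => by
        simp only [map_add]
        exact Summable.tsum_add (hsummable a) (hsummable b)
      map_smul' := fun c z => by
        simp only [map_smul, smul_eq_mul, RingHom.id_apply]
        exact tsum_mul_left } with hTlin
  have hsummable_abs2 : ∀ z : X, Summable fun n => |θ n z| := fun z =>
    Summable.of_nonneg_of_le (fun n => abs_nonneg _)
      (fun n => (aux_abs_apply_le (hθ0 n) z)) (hsummable_abs z)
  have hTbd : ∀ z : X, ‖Tlin z‖ ≤ ‖g‖ * ‖z‖ := by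
    intro z
    have h1 : |∑' n, θ n z| ≤ ∑' n, |θ n z| := by
      have := norm_tsum_le_tsum_norm (f := fun n => θ n z) (by
        simpa [Real.norm_eq_abs] using hsummable_abs2 z)
      simpa [Real.norm_eq_abs] using this
    have h2 : (∑' n, |θ n z|) ≤ ∑' n, θ n (|z|) :=
      Summable.tsum_le_tsum (fun n => aux_abs_apply_le (hθ0 n) z) (hsummable_abs2 z) (hsummable_abs z)
    have h3 : (∑' n, θ n (|z|)) ≤ g (|z|) := htsum_le (|z|) (abs_nonneg z)
    have h4 : g (|z|) ≤ ‖g‖ * ‖z‖ := by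
      have := (le_abs_self _).trans (g.le_opNorm (|z|))
      rwa [norm_abs_eq_norm] at this
    have : Tlin z = ∑' n, θ n z := rfl
    rw [Real.norm_eq_abs, this]
    linarith
  set T : X →L[ℝ] ℝ := Tlin.mkContinuous (‖g‖) hTbd with hT
  have hTapp : ∀ z : X, T z = ∑' n, θ n z := fun z => rfl
  set A : Finset ℕ → (X →L[ℝ] ℝ) := fun F => T - ∑ n ∈ F, θ n with hA
  have hAapp : ∀ (F : Finset ℕ) (z : X), A F z = (∑' n, θ n z) - ∑ n ∈ F, θ n z := by
    intro F z
    simp only [hA, ContinuousLinearMap.sub_apply, ContinuousLinearMap.sum_apply, hTapp]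
  have hpartial_le : ∀ (F : Finset ℕ) (z : X), 0 ≤ z → ∑ n ∈ F, θ n z ≤ ∑' n, θ n z :=
    fun F z hz => Summable.sum_le_tsum F (fun n _ => hθ0 n z hz) (hsummable z)
  have hA0 : ∀ F : Finset ℕ, dualLE 0 (A F) := by
    intro F z hz
    rw [hAapp]
    simp only [ContinuousLinearMap.zero_apply]
    linarith [hpartial_le F z hz]
  have hAle : ∀ F : Finset ℕ, dualLE (A F) g := by
    intro F z hz
    rw [hAapp]
    have h1 := htsum_le z hz
    have h2 : (0:ℝ) ≤ ∑ n ∈ F, θ n z := Finset.sum_nonneg fun n _ => hθ0 n z hz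
    linarith
  have hAdec : ∀ F F' : Finset ℕ, F ⊆ F' → dualLE (A F') (A F) := by
    intro F F' hFF z hz
    rw [hAapp, hAapp]
    have : ∑ n ∈ F, θ n z ≤ ∑ n ∈ F', θ n z :=
      Finset.sum_le_sum_of_subset_of_nonneg hFF fun n _ _ => hθ0 n z hz
    linarith
  have hlow : ∀ h : X →L[ℝ] ℝ, (∀ F : Finset ℕ, dualLE h (A F)) → dualLE h 0 := by
    intro h hh z hz
    simp only [ContinuousLinearMap.zero_apply]
    have hev : ∀ N : ℕ, h z ≤ (∑' n, θ n z) - ∑ n ∈ Finset.range N, θ n z := by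
      intro N
      have := hh (Finset.range N) z hz
      rwa [hAapp] at this
    have htend : Tendsto (fun N => (∑' n, θ n z) - ∑ n ∈ Finset.range N, θ n z)
        atTop (𝓝 0) := by
      have h1 := (hsummable z).hasSum.tendsto_sum_nat
      have h2 := (tendsto_const_nhds (x := ∑' n, θ n z) (f := atTop (α := ℕ))).sub h1
      simpa using h2
    exact ge_of_tendsto htend (Eventually.of_forall hev)
  have hnet := hS finDir A (fun F => hmem (A F) (hA0 F) (hAle F)) hAdec hA0
    (fun h _ hlb => hlow h hlb)
  -- conclude
  have hM0 : (0:ℝ) ≤ M := (norm_nonneg (x 0)).trans (hM 0)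
  rw [Metric.tendsto_atTop]
  intro ε hε
  have hε' : (0:ℝ) < ε / (M + 1) := by positivity
  obtain ⟨F₁, hF₁⟩ := hnet (ε / (M + 1)) hε'
  set F₀ : Finset ℕ := F₁ with hF₀def
  have hF₀ : ∀ F : Finset ℕ, F₀ ⊆ F → |‖A F‖| < ε / (M + 1) := fun F hsub => hF₁ F hsub
  refine ⟨(F₀.sup id) + 1, fun n hn => ?_⟩
  have hnot : n ∉ F₀ := by
    intro hmem'
    have := Finset.le_sup (f := id) hmem'
    simp only [id] at this
    omega
  have hθA : dualLE (θ n) (A F₀) := by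
    intro z hz
    rw [hAapp]
    have h1 : θ n z + ∑ m ∈ F₀, θ m z = ∑ m ∈ insert n F₀, θ m z :=
      (Finset.sum_insert (f := fun m => θ m z) hnot).symm
    have h2 := hpartial_le (insert n F₀) z hz
    rw [← h1] at h2
    linarith
  have hnorm : ‖θ n‖ ≤ ‖A F₀‖ := aux_dual_norm_le (hθ0 n) hθA
  have hAnorm : ‖A F₀‖ < ε / (M + 1) := by
    have := hF₀ F₀ (subset_rfl)
    rwa [abs_of_nonneg (norm_nonneg _)] at this
  have hgx : g (x n) = θ n (x n) := (hθx n).symm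
  have h1 : θ n (x n) ≤ ‖θ n‖ * ‖x n‖ := (le_abs_self _).trans ((θ n).le_opNorm _)
  have h2 : ‖θ n‖ * ‖x n‖ ≤ ‖A F₀‖ * M :=
    mul_le_mul hnorm (hM n) (norm_nonneg _) (norm_nonneg _)
  have h3 : ‖A F₀‖ * M < ε := by
    have hlt : ‖A F₀‖ * M ≤ ‖A F₀‖ * (M + 1) := by nlinarith [norm_nonneg (A F₀)]
    have : ‖A F₀‖ * (M + 1) < (ε / (M + 1)) * (M + 1) := by
      apply mul_lt_mul_of_pos_right hAnorm (by positivity)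
    rw [div_mul_cancel₀ _ (by positivity : (M:ℝ) + 1 ≠ 0)] at this
    linarith
  rw [Real.dist_eq, sub_zero, abs_of_nonneg (by
    have := hg0 (x n) (hx0 n); simpa using this)]
  rw [hgx]
  linarith

end Series

section HB
variable {X : Type*} [NormedAddCommGroup X] [Lattice X] [HasSolidNorm X] [IsOrderedAddMonoid X] [NormedSpace ℝ X]

lemma aux_riesz {y z w : X} (hy0 : 0 ≤ y) (hw : 0 ≤ w) (hyzw : y ≤ z + w) (hz : 0 ≤ z) :
    ∃ u v : X, 0 ≤ u ∧ u ≤ z ∧ 0 ≤ v ∧ v ≤ w ∧ y = u + v := by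
  refine ⟨y ⊓ z, y - y ⊓ z, le_inf hy0 hz, inf_le_right,
    sub_nonneg.2 inf_le_left, ?_, by abel⟩
  rw [sub_le_comm]
  exact le_inf (sub_le_self y hw) (sub_le_iff_le_add.2 hyzw)

lemma aux_ciInf_mul {ι : Type} [Nonempty ι] (a : ι → ℝ) (h0 : ∀ i, 0 ≤ a i) {c : ℝ}
    (hc : 0 < c) : ⨅ i, c * a i = c * ⨅ i, a i := by
  have hb : BddBelow (Set.range a) := ⟨0, by rintro r ⟨i, rfl⟩; exact h0 i⟩
  refine le_antisymm (aux_le_of_forall_sub fun ε hε => ?_)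
    (le_ciInf fun i => mul_le_mul_of_nonneg_left (ciInf_le hb i) hc.le)
  obtain ⟨i, hi⟩ : ∃ i, a i < (⨅ j, a j) + ε / c :=
    exists_lt_of_ciInf_lt (by positivity |> fun h => lt_add_of_pos_right _ h)
  have h1 : (⨅ j, c * a j) ≤ c * a i := ciInf_le ⟨0, by
    rintro r ⟨j, rfl⟩; exact mul_nonneg hc.le (h0 j)⟩ i
  have h2 : c * a i < c * (⨅ j, a j) + ε := by
    have := mul_lt_mul_of_pos_left hi hc
    rw [mul_add, mul_div_cancel₀ _ hc.ne'] at this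
    linarith
  linarith

lemma aux_posPart_add_le (z w : X) : (z + w)⁺ ≤ z⁺ + w⁺ := by
  rw [posPart_def]
  exact sup_le (add_le_add (le_posPart z) (le_posPart w))
    (add_nonneg (posPart_nonneg z) (posPart_nonneg w))

/-- Hahn–Banach style lower-bound functional for directed decreasing positive nets. -/
lemma aux_hb (D : DirectedType) (f : D.ι → (X →L[ℝ] ℝ))
    (hdec : ∀ i j, D.r i j → dualLE (f j) (f i)) (hpos : ∀ i, dualLE 0 (f i))
    (z₀ : X) (hz₀ : 0 ≤ z₀) :
    ∃ h : X →L[ℝ] ℝ, (∀ i, dualLE h (f i)) ∧ h z₀ = ⨅ i, f i z₀ ∧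
      (∀ i (w : X), |h w| ≤ f i (|w|)) := by
  haveI : Nonempty D.ι := D.nonempty
  by_cases hz0 : z₀ = 0
  · refine ⟨0, fun i z hz => by simpa using hpos i z hz, ?_, fun i w => by
      simpa using hpos i (|w|) (abs_nonneg w)⟩
    subst hz0
    simp only [ContinuousLinearMap.zero_apply, map_zero]
    exact (ciInf_const).symm
  set N : X → ℝ := fun z => ⨅ i, f i (z⁺) with hN
  have hbdd : ∀ z : X, BddBelow (Set.range fun i => f i (z⁺)) := fun z =>
    ⟨0, by rintro r ⟨i, rfl⟩; simpa using hpos i _ (posPart_nonneg z)⟩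
  have hNle : ∀ i z, N z ≤ f i (z⁺) := fun i z => ciInf_le (hbdd z) i
  have hN0 : ∀ z, 0 ≤ N z := fun z => le_ciInf fun i => by
    simpa using hpos i _ (posPart_nonneg z)
  have hNhom : ∀ c : ℝ, 0 < c → ∀ z : X, N (c • z) = c * N z := by
    intro c hc z
    have e : ∀ i, f i ((c • z)⁺) = c * f i (z⁺) := fun i => by
      rw [← aux_smul_posPart hc, map_smul, smul_eq_mul]
    calc N (c • z) = ⨅ i, c * f i (z⁺) := by
          rw [hN]
          exact iInf_congr e
    _ = c * N z := aux_ciInf_mul _ (fun i => by simpa using hpos i _ (posPart_nonneg z)) hc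
  have hNadd : ∀ z w : X, N (z + w) ≤ N z + N w := by
    intro z w
    have key : ∀ i j : D.ι, N (z + w) ≤ f i (z⁺) + f j (w⁺) := by
      intro i j
      obtain ⟨k, hik, hjk⟩ := D.directed i j
      have h1 : f k ((z+w)⁺) ≤ f k (z⁺) + f k (w⁺) := by
        have := aux_mono (hpos k) (aux_posPart_add_le z w)
        rwa [map_add] at this
      have h2 : f k (z⁺) ≤ f i (z⁺) := hdec i k hik _ (posPart_nonneg z)
      have h3 : f k (w⁺) ≤ f j (w⁺) := hdec j k hjk _ (posPart_nonneg w)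
      exact (hNle k (z+w)).trans (by linarith)
    have step1 : ∀ i, N (z + w) - f i (z⁺) ≤ N w := fun i =>
      le_ciInf fun j => by linarith [key i j]
    have step2 : N (z + w) - N w ≤ N z := le_ciInf fun i => by linarith [step1 i]
    linarith
  set c₀ : ℝ := ⨅ i, f i z₀ with hc₀
  have hc₀nn : 0 ≤ c₀ := le_ciInf fun i => by simpa using hpos i z₀ hz₀
  have hc₀N : N z₀ = c₀ := by
    rw [hN, hc₀]
    exact iInf_congr fun i => by rw [posPart_eq_self.2 hz₀]
  set f₀ : X →ₗ.[ℝ] ℝ := LinearPMap.mkSpanSingleton z₀ c₀ hz0 with hf₀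
  have hf₀le : ∀ xp : f₀.domain, f₀ xp ≤ N xp := by
    rintro ⟨xv, hxv⟩
    obtain ⟨t, ht⟩ := Submodule.mem_span_singleton.1 hxv
    have hmem2 : t • z₀ ∈ f₀.domain := by rw [ht]; exact hxv
    have happ : f₀ ⟨xv, hxv⟩ = t * c₀ := by
      have e : (⟨xv, hxv⟩ : f₀.domain) = ⟨t • z₀, hmem2⟩ := Subtype.ext ht.symm
      rw [e]
      exact (LinearPMap.mkSpanSingleton'_apply z₀ c₀ _ t hmem2).trans (by rw [smul_eq_mul]; rfl)
    rw [happ]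
    rcases lt_trichotomy t 0 with htn | rfl | htp
    · have hneg : xv ≤ 0 := by
        rw [← ht]
        have h5 : (0:X) ≤ (-t) • z₀ := aux_smul_nonneg (by linarith) hz₀
        rw [neg_smul] at h5
        exact neg_nonneg.1 h5
      have hNxv : N xv = 0 := by
        have hpp : (xv)⁺ = 0 := posPart_eq_zero.2 hneg
        have e3 : N xv = ⨅ i, f i (xv⁺) := rfl
        rw [e3, hpp]
        simp only [map_zero]
        exact ciInf_const
      rw [hNxv]
      exact mul_nonpos_of_nonpos_of_nonneg htn.le hc₀nn
    · simp only [zero_mul, ← ht, zero_smul]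
      exact hN0 0
    · have : N xv = t * c₀ := by
        rw [← ht, hNhom t htp z₀, hc₀N]
      rw [this]
  obtain ⟨glin, hgagree, hgle⟩ := exists_extension_of_le_sublinear f₀ N hNhom hNadd hf₀le
  have hgc : glin z₀ = c₀ := by
    have hmem : z₀ ∈ f₀.domain := by
      rw [hf₀]
      exact Submodule.mem_span_singleton_self z₀
    calc glin z₀ = f₀ ⟨z₀, hmem⟩ := hgagree ⟨z₀, hmem⟩
    _ = c₀ := LinearPMap.mkSpanSingleton_apply ℝ ℝ hz0 c₀
  have habs : ∀ i (w : X), |glin w| ≤ f i (|w|) := by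
    intro i w
    have h1 : glin w ≤ N w := hgle w
    have h2 : glin (-w) ≤ N (-w) := hgle (-w)
    rw [map_neg] at h2
    have h3 : N w ≤ f i (|w|) :=
      (hNle i w).trans (aux_mono (hpos i) (aux_posPart_le_abs w))
    have h4 : N (-w) ≤ f i (|w|) := by
      have h6 : ((-w)⁺ : X) ≤ |w| := by
        have := aux_posPart_le_abs (-w)
        rwa [abs_neg] at this
      exact (hNle i (-w)).trans (aux_mono (hpos i) h6)
    exact abs_le.2 ⟨by linarith, by linarith⟩
  set i₁ : D.ι := Classical.choice D.nonempty with hi₁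
  set h : X →L[ℝ] ℝ := glin.mkContinuous (‖f i₁‖) (fun w => by
    have := habs i₁ w
    have h2 : f i₁ (|w|) ≤ ‖f i₁‖ * ‖w‖ := by
      have := (le_abs_self _).trans ((f i₁).le_opNorm (|w|))
      rwa [norm_abs_eq_norm] at this
    calc ‖glin w‖ = |glin w| := rfl
    _ ≤ ‖f i₁‖ * ‖w‖ := by linarith) with hh
  have happly : ∀ w, h w = glin w := fun w => rfl
  refine ⟨h, fun i z hz => ?_, by rw [happly, hgc], fun i w => by rw [happly]; exact habs i w⟩
  rw [happly]
  have := (hgle z).trans ((hNle i z).trans_eq (by rw [posPart_eq_self.2 hz]))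
  exact this

end HB

section PosPartFun
variable {X : Type*} [NormedAddCommGroup X] [Lattice X] [HasSolidNorm X] [IsOrderedAddMonoid X] [NormedSpace ℝ X]

lemma aux_exists_posPartFun (g : X →L[ℝ] ℝ) :
    ∃ Q : X →L[ℝ] ℝ, dualLE 0 Q ∧ dualLE g Q ∧
      (∀ z : X, 0 ≤ z → ∀ ε : ℝ, 0 < ε → ∃ y : X, 0 ≤ y ∧ y ≤ z ∧ Q z - ε ≤ g y) := by
  classical
  set q : X → ℝ := fun z => ⨆ y : {y : X // 0 ≤ y ∧ y ≤ z}, g y with hq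
  have hne : ∀ {z : X}, 0 ≤ z → Nonempty {y : X // 0 ≤ y ∧ y ≤ z} :=
    fun hz => ⟨⟨0, le_rfl, hz⟩⟩
  have hbdd : ∀ {z : X}, 0 ≤ z → BddAbove (Set.range fun y : {y : X // 0 ≤ y ∧ y ≤ z} => g y) := by
    intro z hz
    refine ⟨‖g‖ * ‖z‖, ?_⟩
    rintro r ⟨⟨y, hy0, hyz⟩, rfl⟩
    have h1 : ‖y‖ ≤ ‖z‖ := aux_norm_le_of_le hy0 hyz
    have h2 : g y ≤ ‖g‖ * ‖y‖ := (le_abs_self _).trans (g.le_opNorm y)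
    have := mul_le_mul_of_nonneg_left h1 (norm_nonneg g)
    linarith
  have hq0 : ∀ {z : X}, 0 ≤ z → 0 ≤ q z := by
    intro z hz
    haveI := hne hz
    have := le_ciSup (hbdd hz) (⟨0, le_rfl, hz⟩ : {y : X // 0 ≤ y ∧ y ≤ z})
    simpa using this
  have hqg : ∀ {z : X}, 0 ≤ z → g z ≤ q z := by
    intro z hz
    haveI := hne hz
    have := le_ciSup (hbdd hz) (⟨z, hz, le_rfl⟩ : {y : X // 0 ≤ y ∧ y ≤ z})
    simpa using this
  have hqle : ∀ {z : X}, 0 ≤ z → q z ≤ ‖g‖ * ‖z‖ := by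
    intro z hz
    haveI := hne hz
    refine ciSup_le ?_
    rintro ⟨y, hy0, hyz⟩
    have h1 : ‖y‖ ≤ ‖z‖ := aux_norm_le_of_le hy0 hyz
    have h2 : g y ≤ ‖g‖ * ‖y‖ := (le_abs_self _).trans (g.le_opNorm y)
    have := mul_le_mul_of_nonneg_left h1 (norm_nonneg g)
    linarith
  have hadd : ∀ z w : X, 0 ≤ z → 0 ≤ w → q (z + w) = q z + q w := by
    intro z w hz hw
    have hzw : (0:X) ≤ z + w := add_nonneg hz hw
    haveI := hne hz
    haveI := hne hw
    haveI := hne hzw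
    refine le_antisymm (ciSup_le ?_) (aux_le_of_forall_sub fun ε hε => ?_)
    · rintro ⟨y, hy0, hyzw⟩
      obtain ⟨u, v, hu0, huz, hv0, hvw, rfl⟩ := aux_riesz hy0 hw hyzw hz
      have h1 : g u ≤ q z := le_ciSup (hbdd hz) (⟨u, hu0, huz⟩ : {y : X // 0 ≤ y ∧ y ≤ z})
      have h2 : g v ≤ q w := le_ciSup (hbdd hw) (⟨v, hv0, hvw⟩ : {y : X // 0 ≤ y ∧ y ≤ w})
      have : g (u + v) = g u + g v := map_add g u v
      rw [this]
      linarith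
    · obtain ⟨y1, hy1⟩ := exists_lt_of_lt_ciSup (show q z - ε/2 < q z by linarith)
      obtain ⟨y2, hy2⟩ := exists_lt_of_lt_ciSup (show q w - ε/2 < q w by linarith)
      have hfeas : 0 ≤ (y1:X) + y2 ∧ (y1:X) + y2 ≤ z + w :=
        ⟨add_nonneg y1.2.1 y2.2.1, add_le_add y1.2.2 y2.2.2⟩
      have h3 : g ((y1:X) + y2) ≤ q (z+w) :=
        le_ciSup (hbdd hzw) (⟨(y1:X) + y2, hfeas.1, hfeas.2⟩ : {y : X // 0 ≤ y ∧ y ≤ z + w})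
      rw [map_add] at h3
      linarith
  have hscale : ∀ (c : ℝ), 0 < c → ∀ {z : X}, 0 ≤ z → q (c • z) ≤ c * q z := by
    intro c hc z hz
    haveI := hne hz
    haveI := hne (aux_smul_nonneg hc.le hz)
    refine ciSup_le ?_
    rintro ⟨y, hy0, hyz⟩
    have hfeas0 : (0:X) ≤ c⁻¹ • y := aux_smul_nonneg (by positivity) hy0
    have hfeas1 : c⁻¹ • y ≤ z := by
      have := aux_smul_le_smul (c := c⁻¹) (by positivity) hyz
      rwa [smul_smul, inv_mul_cancel₀ hc.ne', one_smul] at this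
    have h1 : g (c⁻¹ • y) ≤ q z :=
      le_ciSup (hbdd hz) (⟨c⁻¹ • y, hfeas0, hfeas1⟩ : {y : X // 0 ≤ y ∧ y ≤ z})
    have h2 : c * g (c⁻¹ • y) = g y := by
      rw [← smul_eq_mul, ← map_smul, smul_smul, mul_inv_cancel₀ hc.ne', one_smul]
    rw [← h2]
    exact mul_le_mul_of_nonneg_left h1 hc.le
  have hhom : ∀ (c : ℝ) (z : X), 0 < c → 0 ≤ z → q (c • z) = c * q z := by
    intro c z hc hz
    refine le_antisymm (hscale c hc hz) ?_
    have h5 := hscale c⁻¹ (by positivity) (aux_smul_nonneg hc.le hz)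
    rw [smul_smul, inv_mul_cancel₀ hc.ne', one_smul] at h5
    have h6 := mul_le_mul_of_nonneg_left h5 hc.le
    rw [← mul_assoc, mul_inv_cancel₀ hc.ne', one_mul] at h6
    exact h6
  have hbd : ∀ z : X, 0 ≤ z → |q z| ≤ ‖g‖ * ‖z‖ := by
    intro z hz
    rw [abs_of_nonneg (hq0 hz)]
    exact hqle hz
  obtain ⟨Q, hQ⟩ := aux_extend_pos q (fun z w hz hw => hadd z w hz hw) hhom (‖g‖) hbd
  have hqzero : q 0 = 0 := by
    haveI := hne (le_refl (0:X))
    refine le_antisymm (ciSup_le ?_) (hq0 le_rfl)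
    rintro ⟨y, hy0, hyz⟩
    have : y = 0 := le_antisymm hyz hy0
    simp [this]
  have hQcone : ∀ z : X, 0 ≤ z → Q z = q z := by
    intro z hz
    rw [hQ z, posPart_eq_self.2 hz, negPart_eq_zero.2 hz, hqzero, sub_zero]
  refine ⟨Q, ?_, ?_, ?_⟩
  · intro z hz
    rw [hQcone z hz]
    simpa using hq0 hz
  · intro z hz
    rw [hQcone z hz]
    exact hqg hz
  · intro z hz ε hε
    haveI := hne hz
    rw [hQcone z hz]
    obtain ⟨y, hy⟩ := exists_lt_of_lt_ciSup (show q z - ε < q z by linarith)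
    exact ⟨y, y.2.1, y.2.2, hy.le⟩

lemma aux_posPartFun_ocdual {g Q : X →L[ℝ] ℝ} (hg : InOCDual g) (hQ0 : dualLE 0 Q)
    (happrox : ∀ z : X, 0 ≤ z → ∀ ε : ℝ, 0 < ε → ∃ y, 0 ≤ y ∧ y ≤ z ∧ Q z - ε ≤ g y) :
    InOCDual Q := by
  intro D f hf ε hε
  have hch : ∀ i, ∃ y : X, 0 ≤ y ∧ y ≤ |f i| ∧ Q (|f i|) - ε/4 ≤ g y :=
    fun i => happrox _ (abs_nonneg _) (ε/4) (by linarith)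
  choose y hy0 hyle hyg using hch
  have hynull : OrderConvNet D y 0 := by
    obtain ⟨E, w, hdecE, hglb, hdom⟩ := hf
    refine ⟨E, w, hdecE, hglb, fun γ => ?_⟩
    obtain ⟨i₀, hi₀⟩ := hdom γ
    refine ⟨i₀, fun i hi => ?_⟩
    have h1 := hi₀ i hi
    rw [sub_zero] at h1 ⊢
    rw [abs_of_nonneg (hy0 i)]
    exact (hyle i).trans h1
  obtain ⟨i₁, hi₁⟩ := hg D y hynull (ε/4) (by linarith)
  refine ⟨i₁, fun i hi => ?_⟩
  have h1 : |Q (f i)| ≤ Q (|f i|) := aux_abs_apply_le hQ0 _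
  have h2 : Q (|f i|) - ε/4 ≤ g (y i) := hyg i
  have h3 : g (y i) ≤ |g (y i)| := le_abs_self _
  have h4 := hi₁ i hi
  linarith

lemma aux_scaled_disjoint {a b : X} {c : ℝ} (hc : 0 < c) :
    (a - c • b)⁺ ⊓ (b - c⁻¹ • a)⁺ = 0 := by
  have hinv : (0:ℝ) < c⁻¹ := by positivity
  have e1 : c⁻¹ • ((c • b - a)⁺) = (b - c⁻¹ • a)⁺ := by
    rw [aux_smul_posPart hinv (c • b - a), smul_sub, smul_smul, inv_mul_cancel₀ hc.ne',
      one_smul]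
  have e2 : ((c • b - a)⁺ : X) = (a - c • b)⁻ := by
    rw [← posPart_neg, neg_sub]
  rw [← e1, e2]
  exact aux_smul_inf_zero (posPart_nonneg _) (negPart_nonneg _)
    (posPart_inf_negPart_eq_zero _) hinv.le

end PosPartFun

section Assemble
variable {X : Type*} [NormedAddCommGroup X] [Lattice X] [HasSolidNorm X] [IsOrderedAddMonoid X] [NormedSpace ℝ X]

lemma aux_weakly_null_univ (H : DualOCOn (Set.univ : Set (X →L[ℝ] ℝ)))
    (x : ℕ → X) (hx0 : ∀ n, 0 ≤ x n) (M : ℝ) (hM : ∀ n, ‖x n‖ ≤ M)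
    (hdisj : ∀ n m, n ≠ m → x n ⊓ x m = 0) : WeaklyNull x := by
  intro gg
  obtain ⟨Q, hQ0, hQg, _⟩ := aux_exists_posPartFun gg
  have hQ'0 : dualLE 0 (Q - gg) := by
    intro z hz
    have := hQg z hz
    simp only [ContinuousLinearMap.sub_apply, ContinuousLinearMap.zero_apply]
    linarith
  have t1 := aux_series Set.univ H Q hQ0 (fun h _ _ => Set.mem_univ h) x hx0 M hM hdisj
  have t2 := aux_series Set.univ H (Q - gg) hQ'0 (fun h _ _ => Set.mem_univ h) x hx0 M hM hdisj
  have t3 := t1.sub t2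
  simp only [ContinuousLinearMap.sub_apply, sub_sub_cancel, sub_zero] at t3
  exact t3

lemma aux_ocdual_disjoint_null (hOC : DualOCOn (OCDual X))
    (x : ℕ → X) (hx0 : ∀ n, 0 ≤ x n) (M : ℝ) (hM : ∀ n, ‖x n‖ ≤ M)
    (hdisj : ∀ n m, n ≠ m → x n ⊓ x m = 0) :
    ∀ gg : X →L[ℝ] ℝ, InOCDual gg → Tendsto (fun n => gg (x n)) atTop (𝓝 0) := by
  intro gg hgg
  obtain ⟨Q, hQ0, hQg, happrox⟩ := aux_exists_posPartFun gg
  have hQoc : InOCDual Q := aux_posPartFun_ocdual hgg hQ0 happrox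
  have hQ'0 : dualLE 0 (Q - gg) := by
    intro z hz
    have := hQg z hz
    simp only [ContinuousLinearMap.sub_apply, ContinuousLinearMap.zero_apply]
    linarith
  have hQ'oc : InOCDual (Q - gg) := aux_ocdual_sub hQoc hgg
  have hmemQ : ∀ h : X →L[ℝ] ℝ, dualLE 0 h → dualLE h Q → h ∈ OCDual X := fun h h0 hle =>
    aux_ocdual_dominated hQoc (fun z => (aux_abs_apply_le h0 z).trans (hle _ (abs_nonneg z)))
  have hmemQ' : ∀ h : X →L[ℝ] ℝ, dualLE 0 h → dualLE h (Q - gg) → h ∈ OCDual X :=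
    fun h h0 hle =>
    aux_ocdual_dominated hQ'oc (fun z => (aux_abs_apply_le h0 z).trans (hle _ (abs_nonneg z)))
  have t1 := aux_series (OCDual X) hOC Q hQ0 hmemQ x hx0 M hM hdisj
  have t2 := aux_series (OCDual X) hOC (Q - gg) hQ'0 hmemQ' x hx0 M hM hdisj
  have t3 := t1.sub t2
  simp only [ContinuousLinearMap.sub_apply, sub_sub_cancel, sub_zero] at t3
  exact t3

lemma aux_forward_ocdual (H : DualOCOn (Set.univ : Set (X →L[ℝ] ℝ))) :
    DualOCOn (OCDual X) := by
  intro D f hfS hdec hpos hlb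
  haveI : Nonempty D.ι := D.nonempty
  refine H D f (fun i => Set.mem_univ _) hdec hpos ?_
  intro h _ hlow z hz
  obtain ⟨h₀, hh1, hh2, hh3⟩ := aux_hb D f hdec hpos z hz
  have hoc : InOCDual h₀ :=
    aux_ocdual_dominated (hfS (Classical.choice D.nonempty))
      (hh3 (Classical.choice D.nonempty))
  have h4 : dualLE h₀ 0 := hlb h₀ hoc hh1
  have h5 : h₀ z ≤ 0 := by simpa using h4 z hz
  rw [hh2] at h5
  have h6 : h z ≤ ⨅ i, f i z := le_ciInf fun i => hlow i z hz
  simp only [ContinuousLinearMap.zero_apply]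
  linarith

lemma aux_backward (hOC : DualOCOn (OCDual X)) (hDOCP : DOCP X) [CompleteSpace X] :
    DualOCOn (Set.univ : Set (X →L[ℝ] ℝ)) := by
  classical
  intro D f _ hdec hpos hlb
  by_contra hcon
  haveI : Nonempty D.ι := D.nonempty
  unfold NetTendstoZero at hcon
  push_neg at hcon
  obtain ⟨ε, hε, hcof⟩ := hcon
  have hcof' : ∀ i₀ : D.ι, ∃ i, D.r i₀ i ∧ ε ≤ ‖f i‖ := by
    intro i₀
    obtain ⟨i, hri, hni⟩ := hcof i₀
    exact ⟨i, hri, by rwa [abs_of_nonneg (norm_nonneg _)] at hni⟩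
  -- pointwise decrease to 0
  have hpt : ∀ z : X, 0 ≤ z → ∀ δ : ℝ, 0 < δ → ∃ i, f i z < δ := by
    intro z hz δ hδ
    obtain ⟨h₀, hh1, hh2, _⟩ := aux_hb D f hdec hpos z hz
    have h4 : dualLE h₀ 0 := hlb h₀ (Set.mem_univ _) hh1
    have h5 : h₀ z ≤ 0 := by simpa using h4 z hz
    rw [hh2] at h5
    exact exists_lt_of_ciInf_lt (lt_of_le_of_lt h5 hδ)
  set b : D.ι := Classical.choice D.nonempty with hbdef
  set G : ℝ := ‖f b‖ + 1 with hG
  have hGpos : 0 < G := by positivity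
  have hnorm_le : ∀ i, D.r b i → ‖f i‖ ≤ G := by
    intro i hi
    have := aux_dual_norm_le (hpos i) (hdec b i hi)
    rw [hG]
    linarith
  -- vector selector
  have hsel : ∀ i : D.ι, ∃ v : X, 0 ≤ v ∧ ‖v‖ ≤ 1 ∧ (ε ≤ ‖f i‖ → ε/2 < f i v) := by
    intro i
    by_cases hi : ε ≤ ‖f i‖
    · have hex : ∃ z : X, ‖z‖ ≤ 1 ∧ ε/2 < |f i z| := by
        by_contra hno
        push_neg at hno
        have hle2 : ‖f i‖ ≤ ε/2 := by
          refine ContinuousLinearMap.opNorm_le_bound _ (by linarith) fun z => ?_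
          rcases eq_or_ne z 0 with rfl | hz
          · simp
          · have hzpos : 0 < ‖z‖ := norm_pos_iff.2 hz
            have hu : ‖(‖z‖⁻¹ • z : X)‖ ≤ 1 := by
              rw [norm_smul, Real.norm_eq_abs, abs_of_nonneg (by positivity),
                inv_mul_cancel₀ hzpos.ne']
            have h8 := hno _ hu
            have h9 : f i z = ‖z‖ * f i (‖z‖⁻¹ • z) := by
              rw [← smul_eq_mul, ← map_smul, smul_smul, mul_inv_cancel₀ hzpos.ne', one_smul]
            rw [Real.norm_eq_abs, h9, abs_mul, abs_of_nonneg hzpos.le]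
            calc ‖z‖ * |f i (‖z‖⁻¹ • z)| ≤ ‖z‖ * (ε/2) :=
                  mul_le_mul_of_nonneg_left h8 hzpos.le
            _ = ε/2 * ‖z‖ := by ring
        linarith
      obtain ⟨z, hz1, hz2⟩ := hex
      exact ⟨|z|, abs_nonneg z, by rwa [norm_abs_eq_norm], fun _ =>
        lt_of_lt_of_le hz2 (aux_abs_apply_le (hpos i) z)⟩
    · exact ⟨0, le_rfl, by simp, fun h => absurd h hi⟩
  choose ξ hξ0 hξ1 hξ2 using hsel
  -- constants
  set β : ℝ := ε / (8 * G) with hβ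
  have hβpos : 0 < β := by positivity
  set r : ℝ := (2:ℝ)⁻¹ with hr
  have hr0 : (0:ℝ) < r := by norm_num
  have hr1 : r < 1 := by norm_num
  set δ : ℕ → ℝ := fun k => (ε/8) * β * r^k with hδ
  have hδpos : ∀ k, 0 < δ k := fun k => by positivity
  -- recursion
  have hstep : ∀ (k : ℕ) (p : D.ι × X), ∃ i' : D.ι,
      D.r p.1 i' ∧ ε ≤ ‖f i'‖ ∧ D.r b i' ∧ (0 ≤ p.2 → f i' p.2 < δ k) := by
    intro k p
    by_cases hp : 0 ≤ p.2
    · obtain ⟨i1, hi1⟩ := hpt p.2 hp (δ k) (hδpos k)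
      obtain ⟨i2, h12, h22⟩ := D.directed p.1 i1
      obtain ⟨i3, h13, h23⟩ := D.directed i2 b
      obtain ⟨i', hri, hni⟩ := hcof' i3
      refine ⟨i', D.trans _ _ _ h12 (D.trans _ _ _ h13 hri), hni,
        D.trans _ _ _ h23 hri, fun _ => ?_⟩
      have h7 : f i' p.2 ≤ f i1 p.2 :=
        hdec i1 i' (D.trans _ _ _ h22 (D.trans _ _ _ h13 hri)) p.2 hp
      linarith
    · obtain ⟨i2, h12, h22⟩ := D.directed p.1 b
      obtain ⟨i', hri, hni⟩ := hcof' i2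
      exact ⟨i', D.trans _ _ _ h12 hri, hni, D.trans _ _ _ h22 hri,
        fun h => absurd h hp⟩
  choose step hstep1 hstep2 hstep3 hstep4 using hstep
  obtain ⟨i₀, hri₀, hni₀⟩ := hcof' b
  set seq : ℕ → D.ι × X := fun k => Nat.rec (motive := fun _ => D.ι × X)
    (i₀, ξ i₀) (fun m p => (step (m+1) p, p.2 + ξ (step (m+1) p))) k with hseq
  set α : ℕ → D.ι := fun k => (seq k).1 with hα
  set x : ℕ → X := fun k => ξ (α k) with hx
  have seq_succ1 : ∀ k, α (k+1) = step (k+1) (seq k) := fun k => rfl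
  have seq_succ2 : ∀ k, (seq (k+1)).2 = (seq k).2 + x (k+1) := fun k => rfl
  have hα0 : α 0 = i₀ := rfl
  have hs_eq : ∀ k, (seq k).2 = ∑ j ∈ Finset.range (k+1), x j := by
    intro k
    induction k with
    | zero => simp [hx, hα]; rfl
    | succ m ih => rw [seq_succ2 m, ih, ← Finset.sum_range_succ]
  have hs0 : ∀ k, (0:X) ≤ (seq k).2 := by
    intro k
    rw [hs_eq]
    exact Finset.sum_nonneg fun j _ => hξ0 _
  have inv1 : ∀ k, ε ≤ ‖f (α k)‖ := by
    intro k
    cases k with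
    | zero => exact hni₀
    | succ m => rw [seq_succ1 m]; exact hstep2 (m+1) (seq m)
  have inv2 : ∀ k, D.r b (α k) := by
    intro k
    cases k with
    | zero => exact hri₀
    | succ m => rw [seq_succ1 m]; exact hstep3 (m+1) (seq m)
  have hsmall : ∀ m, f (α (m+1)) ((seq m).2) < δ (m+1) := by
    intro m
    rw [seq_succ1 m]
    exact hstep4 (m+1) (seq m) (hs0 m)
  have hfG : ∀ k, ‖f (α k)‖ ≤ G := fun k => hnorm_le _ (inv2 k)
  have hx0' : ∀ k, 0 ≤ x k := fun k => hξ0 _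
  have hx1 : ∀ k, ‖x k‖ ≤ 1 := fun k => hξ1 _
  have hxε : ∀ k, ε/2 < f (α k) (x k) := fun k => hξ2 _ (inv1 k)
  -- the disjointified sequence
  set tco : ℕ → ℝ := fun j => β * r^j with htco
  have htco_pos : ∀ j, 0 < tco j := fun j => by positivity
  have hsummable_tail : ∀ k : ℕ, Summable (fun j => (if k < j then tco j else 0) • x j) := by
    intro k
    refine Summable.of_norm ?_
    have hcomp : ∀ j : ℕ, ‖(if k < j then tco j else 0) • x j‖ ≤ β * r^j := by
      intro j
      rw [norm_smul]
      split_ifs with hkj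
      · rw [Real.norm_eq_abs, abs_of_nonneg (htco_pos j).le]
        calc tco j * ‖x j‖ ≤ tco j * 1 :=
              mul_le_mul_of_nonneg_left (hx1 j) (htco_pos j).le
        _ = β * r^j := by rw [mul_one]
      · simp
        positivity
    refine Summable.of_nonneg_of_le (fun j => norm_nonneg _) hcomp ?_
    exact (summable_geometric_of_lt_one hr0.le hr1).mul_left β
  set tail : ℕ → X := fun k => ∑' j, (if k < j then tco j else 0) • x j with htail
  have htail0 : ∀ k, (0:X) ≤ tail k := by
    intro k
    refine tsum_nonneg fun j => ?_
    split_ifs with h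
    · exact aux_smul_nonneg (htco_pos j).le (hx0' j)
    · simp
  set A : ℕ → X := fun k => (β * r^k)⁻¹ • ∑ j ∈ Finset.range k, x j with hA
  have hA0 : ∀ k, (0:X) ≤ A k := fun k =>
    aux_smul_nonneg (by positivity) (Finset.sum_nonneg fun j _ => hx0' j)
  set u : ℕ → X := fun k => (x k - A k - tail k)⁺ with hu
  have hu0 : ∀ k, 0 ≤ u k := fun k => posPart_nonneg _
  have hux : ∀ k, u k ≤ x k := by
    intro k
    have h1 : x k - A k - tail k ≤ x k := by
      have := add_nonneg (hA0 k) (htail0 k)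
      have h2 : x k - A k - tail k = x k - (A k + tail k) := by abel
      rw [h2]
      exact sub_le_self _ this
    calc u k ≤ (x k)⁺ := posPart_mono h1
    _ = x k := posPart_eq_self.2 (hx0' k)
  have hu1 : ∀ k, ‖u k‖ ≤ 1 := fun k =>
    (aux_norm_le_of_le (hu0 k) (hux k)).trans (hx1 k)
  -- disjointness
  have hudisj : ∀ j k, j ≠ k → u j ⊓ u k = 0 := by
    have key : ∀ j k, j < k → u j ⊓ u k = 0 := by
      intro j k hjk
      have hc : (0:ℝ) < β * r^k := by positivity
      have h1 : u j ≤ (x j - (β * r^k) • x k)⁺ := by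
        refine posPart_mono ?_
        have hterm : (β * r^k) • x k ≤ A j + tail j := by
          have h2 : (if j < k then tco k else 0) • x k = (β * r^k) • x k := by
            rw [if_pos hjk]
          have h3 : (β * r^k) • x k ≤ tail j := by
            rw [← h2]
            exact Summable.le_tsum (hsummable_tail j) k fun m _ => by
              split_ifs with h
              · exact aux_smul_nonneg (htco_pos m).le (hx0' m)
              · rw [zero_smul]
          calc (β * r^k) • x k ≤ tail j := h3
          _ ≤ A j + tail j := le_add_of_nonneg_left (hA0 j)
        have : x j - A j - tail j = x j - (A j + tail j) := by abel
        rw [this]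
        exact sub_le_sub_left hterm (x j)
      have h2 : u k ≤ (x k - (β * r^k)⁻¹ • x j)⁺ := by
        refine posPart_mono ?_
        have hterm : (β * r^k)⁻¹ • x j ≤ A k + tail k := by
          have h3 : (β * r^k)⁻¹ • x j ≤ A k := by
            rw [hA]
            refine aux_smul_le_smul (by positivity) ?_
            exact Finset.single_le_sum (fun m _ => hx0' m) (Finset.mem_range.2 hjk)
          exact h3.trans (le_add_of_nonneg_right (htail0 k))
        have : x k - A k - tail k = x k - (A k + tail k) := by abel
        rw [this]
        exact sub_le_sub_left hterm (x k)
      have h3 := aux_scaled_disjoint (a := x j) (b := x k) hc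
      refine le_antisymm ?_ (le_inf (hu0 j) (hu0 k))
      calc u j ⊓ u k ≤ (x j - (β * r^k) • x k)⁺ ⊓ (x k - (β * r^k)⁻¹ • x j)⁺ :=
            inf_le_inf h1 h2
      _ = 0 := h3
    intro j k hjk
    rcases lt_or_gt_of_ne hjk with h | h
    · exact key j k h
    · rw [inf_comm]
      exact key k j h
  -- lower bound for f (α k) (u k)
  have hfu : ∀ k, ε/8 ≤ f (α k) (u k) := by
    intro k
    have hA_est : f (α k) (A k) ≤ ε/8 := by
      cases k with
      | zero =>
        have : A 0 = 0 := by
          rw [hA]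
          simp
        rw [this, map_zero]
        linarith
      | succ m =>
        have h1 : f (α (m+1)) ((seq m).2) < δ (m+1) := hsmall m
        rw [hs_eq m] at h1
        have h2 : f (α (m+1)) (A (m+1)) =
            (β * r^(m+1))⁻¹ * f (α (m+1)) (∑ j ∈ Finset.range (m+1), x j) := by
          rw [hA, map_smul, smul_eq_mul]
        rw [h2]
        have h3 : (0:ℝ) < (β * r^(m+1))⁻¹ := by positivity
        have h4 : (β * r^(m+1))⁻¹ * f (α (m+1)) (∑ j ∈ Finset.range (m+1), x j) ≤
            (β * r^(m+1))⁻¹ * δ (m+1) := by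
          exact mul_le_mul_of_nonneg_left h1.le h3.le
        have h5 : (β * r^(m+1))⁻¹ * δ (m+1) = ε/8 := by
          rw [hδ]
          field_simp
        linarith
    have htail_est : f (α k) (tail k) ≤ ε/4 := by
      have h1 : f (α k) (tail k) = ∑' j, (if k < j then tco j else 0) * f (α k) (x j) := by
        rw [htail]
        rw [ContinuousLinearMap.map_tsum _ (hsummable_tail k)]
        congr 1
        funext j
        rw [map_smul, smul_eq_mul]
      rw [h1]
      have h2 : ∀ j, (if k < j then tco j else 0) * f (α k) (x j) ≤ tco j * G := by
        intro j
        split_ifs with h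
        · have h3 : f (α k) (x j) ≤ G := by
            have := (le_abs_self _).trans ((f (α k)).le_opNorm (x j))
            have h4 := mul_le_mul (hfG k) (hx1 j) (norm_nonneg _) hGpos.le
            rw [mul_one] at h4
            linarith
          exact mul_le_mul_of_nonneg_left h3 (htco_pos j).le
        · rw [zero_mul]
          have h5 : 0 ≤ f (α k) (x j) := by
            have := hpos (α k) (x j) (hx0' j)
            simpa using this
          positivity
      have hsum1 : Summable (fun j => (if k < j then tco j else 0) * f (α k) (x j)) := by
        have h0 := ((hsummable_tail k).hasSum.mapL (f (α k))).summable
        simp only [map_smul, smul_eq_mul] at h0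
        exact h0
      have hsum2 : Summable (fun j : ℕ => tco j * G) := by
        have := (summable_geometric_of_lt_one hr0.le hr1).mul_left β
        exact this.mul_right G
      have h6 := Summable.tsum_le_tsum h2 hsum1 hsum2
      have h7 : ∑' j : ℕ, tco j * G = β * G * (1-r)⁻¹ := by
        have he : ∀ j:ℕ, tco j * G = (β * G) * r^j := fun j => by rw [htco]; ring
        rw [tsum_congr he, tsum_mul_left, tsum_geometric_of_lt_one hr0.le hr1]
        try ring
      have h8 : β * G * (1-r)⁻¹ = ε/4 := by
        rw [hβ, hr]
        field_simp
        ring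
      linarith
    have hmain : f (α k) (x k - A k - tail k) ≤ f (α k) (u k) :=
      aux_mono (hpos (α k)) (le_posPart _)
    have h9 : f (α k) (x k - A k - tail k) =
        f (α k) (x k) - f (α k) (A k) - f (α k) (tail k) := by
      rw [map_sub, map_sub]
    have h10 := hxε k
    rw [h9] at hmain
    linarith
  -- σ(X, X_n^~)-null
  have hσ : ∀ gg : X →L[ℝ] ℝ, InOCDual gg → Tendsto (fun n => gg (u n)) atTop (𝓝 0) :=
    aux_ocdual_disjoint_null hOC u hu0 1 hu1 hudisj
  have hweak : WeaklyNull u := hDOCP u hu0 ⟨1, hu1⟩ hudisj hσ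
  have hcontr := hweak (f b)
  rw [Metric.tendsto_atTop] at hcontr
  obtain ⟨N, hN⟩ := hcontr (ε/8) (by linarith)
  have h11 := hN N le_rfl
  have h12 : ε/8 ≤ f b (u N) := by
    have := hdec b (α N) (inv2 N) (u N) (hu0 N)
    linarith [hfu N]
  rw [Real.dist_eq, sub_zero] at h11
  have h13 : f b (u N) ≤ |f b (u N)| := le_abs_self _
  linarith

end Assemble


/-- `X*` is order continuous iff `X_n^~` is order continuous and `X`
has the disjoint order continuity property. -/
theorem stmt7 {X : Type*} [NormedAddCommGroup X] [Lattice X] [HasSolidNorm X] [IsOrderedAddMonoid X] [NormedSpace ℝ X] [CompleteSpace X] :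
    DualOrderContinuous X ↔ OCDualOrderContinuous X ∧ DOCP X := by
  constructor
  · intro H
    refine ⟨aux_forward_ocdual H, ?_⟩
    intro x hx0 hbdd hdisj _
    obtain ⟨M, hM⟩ := hbdd
    exact aux_weakly_null_univ H x hx0 M hM hdisj
  · rintro ⟨hOC, hDOCP⟩
    exact aux_backward hOC hDOCP
end
end
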